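/- arXiv:2310.00103 — 4 statements merged into one kernel-verified Lean document; each statement's English description precedes it below -/
import Mathlib

section
/- Every simple object L of C_k contains a nonzero homogeneous vector v, of some degree μ ∈ ℤ^θ, such that u·v = 0 for every homogeneous u ∈ U⁺ of nonzero degree, and then L ≅ L(μ). Moreover L(μ) ≅ L(λ) in C_k if and only if μ = λ; thus μ ↦ L(μ) is a bijection between ℤ^θ and isomorphism classes of simple objects of C_k. -/
open scoped TensorProduct

/-- The data of a `ℤ^θ`-graded algebra over `k` with a triangular decomposition
`U⁻ ⊗ U⁰ ⊗ U⁺ ≃ U` satisfying the axioms of Andersen–Jantzen–Soergel, together with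
the character-twist `μ ↦ μ̃` and the base algebra map `π : U⁰ → k`. -/
structure AJSCtx (k : Type) [Field k] (θ : ℕ) where
  /-- the underlying algebra -/
  U : Type
  [ringU : Ring U]
  [algU : Algebra k U]
  /-- the `ℤ^θ`-grading of `U` -/
  grade : (Fin θ → ℤ) → Submodule k U
  internal : DirectSum.IsInternal grade
  one_mem : (1 : U) ∈ grade 0
  mul_mem : ∀ {ν μ : Fin θ → ℤ} {a b : U}, a ∈ grade ν → b ∈ grade μ → a * b ∈ grade (ν + μ)
  /-- the negative part `U⁻` -/
  Um : Subalgebra k U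
  /-- the zero part `U⁰` -/
  U0 : Subalgebra k U
  /-- the positive part `U⁺` -/
  Up : Subalgebra k U
  Um_graded : Subalgebra.toSubmodule Um = ⨆ ν, Subalgebra.toSubmodule Um ⊓ grade ν
  U0_graded : Subalgebra.toSubmodule U0 = ⨆ ν, Subalgebra.toSubmodule U0 ⊓ grade ν
  Up_graded : Subalgebra.toSubmodule Up = ⨆ ν, Subalgebra.toSubmodule Up ⊓ grade ν
  /-- multiplication induces a linear isomorphism `U⁻ ⊗ U⁰ ⊗ U⁺ → U` -/
  triangular :
    Function.Bijective
      (TensorProduct.lift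
        ((LinearMap.mul k U).compl₁₂ Um.val.toLinearMap
          (TensorProduct.lift
            ((LinearMap.mul k U).compl₁₂ U0.val.toLinearMap Up.val.toLinearMap))))
  U0_deg0 : Subalgebra.toSubmodule U0 ≤ grade 0
  Up_deg0 : Subalgebra.toSubmodule Up ⊓ grade 0 = Submodule.span k {1}
  Um_deg0 : Subalgebra.toSubmodule Um ⊓ grade 0 = Submodule.span k {1}
  Up_pos : ∀ ν : Fin θ → ℤ, Subalgebra.toSubmodule Up ⊓ grade ν ≠ ⊥ → 0 ≤ ν
  Um_neg : ∀ ν : Fin θ → ℤ, Subalgebra.toSubmodule Um ⊓ grade ν ≠ ⊥ → ν ≤ 0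
  finUp : FiniteDimensional k Up
  finUm : FiniteDimensional k Um
  commU0 : ∀ s t : U0, s * t = t * s
  /-- the group homomorphism `μ ↦ μ̃` into algebra automorphisms of `U⁰` -/
  tilde : (Fin θ → ℤ) → (U0 ≃ₐ[k] U0)
  tilde_zero : tilde 0 = AlgEquiv.refl
  tilde_add : ∀ μ ν : Fin θ → ℤ, tilde (μ + ν) = (tilde μ).trans (tilde ν)
  tilde_comm : ∀ (μ : Fin θ → ℤ), ∀ u ∈ grade μ, ∀ s : U0, (s : U) * u = u * ((tilde μ s : U))
  /-- the algebra map `π : U⁰ → k` -/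
  π : U0 →ₐ[k] k

attribute [instance] AJSCtx.ringU AJSCtx.algU

variable {k : Type} [Field k] {θ : ℕ}

/-- An object of the category `C_k`: a finite-dimensional `ℤ^θ`-graded `U`-module `M`
with `s·m = π(μ̃(s))·m` for `s ∈ U⁰` and `m ∈ M` homogeneous of degree `μ`. -/
structure CMod (C : AJSCtx k θ) where
  /-- the underlying space -/
  M : Type
  [acg : AddCommGroup M]
  [modk : Module k M]
  /-- the action of `U`, as a representation `U → End_k(M)` -/
  ρ : C.U →ₐ[k] Module.End k M
  /-- the `ℤ^θ`-grading of `M` -/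
  grM : (Fin θ → ℤ) → Submodule k M
  internal : DirectSum.IsInternal grM
  fin : FiniteDimensional k M
  act_graded : ∀ (ν μ : Fin θ → ℤ) (u : C.U) (m : M),
    u ∈ C.grade ν → m ∈ grM μ → ρ u m ∈ grM (ν + μ)
  act_U0 : ∀ (s : C.U0) (μ : Fin θ → ℤ) (m : M),
    m ∈ grM μ → ρ (s : C.U) m = C.π (C.tilde μ s) • m

attribute [instance] CMod.acg CMod.modk CMod.fin

variable {C : AJSCtx k θ}

/-- A submodule is graded if it is the sum of its homogeneous components. -/
def CMod.gradedSub (A : CMod C) (p : Submodule k A.M) : Prop :=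
  p = ⨆ ν, p ⊓ A.grM ν

/-- A submodule stable under the `U`-action. -/
def CMod.stable (A : CMod C) (p : Submodule k A.M) : Prop :=
  ∀ u : C.U, ∀ m ∈ p, A.ρ u m ∈ p

/-- Morphisms in `C_k`: `U`-equivariant degree-preserving `k`-linear maps. -/
def IsCHom (A B : CMod C) (f : A.M →ₗ[k] B.M) : Prop :=
  (∀ (u : C.U) (m : A.M), f (A.ρ u m) = B.ρ u (f m)) ∧
  (∀ ν : Fin θ → ℤ, ∀ m ∈ A.grM ν, f m ∈ B.grM ν)

/-- The space `Hom_{C_k}(A, B)` as a `k`-submodule of the linear maps. -/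
def homC (A B : CMod C) : Submodule k (A.M →ₗ[k] B.M) where
  carrier := {f | IsCHom A B f}
  add_mem' := by
    rintro f g ⟨hf1, hf2⟩ ⟨hg1, hg2⟩
    refine ⟨fun u m => ?_, fun ν m hm => Submodule.add_mem _ (hf2 ν m hm) (hg2 ν m hm)⟩
    simp [LinearMap.add_apply, hf1 u m, hg1 u m, map_add]
  zero_mem' := by
    refine ⟨fun u m => ?_, fun ν m hm => Submodule.zero_mem _⟩
    simp
  smul_mem' := by
    rintro c f ⟨hf1, hf2⟩
    refine ⟨fun u m => ?_, fun ν m hm => Submodule.smul_mem _ _ (hf2 ν m hm)⟩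
    simp [LinearMap.smul_apply, hf1 u m, map_smul]

/-- The linear map `U → M`, `u ↦ u·m`. -/
def actVec (A : CMod C) (m : A.M) : C.U →ₗ[k] A.M where
  toFun u := A.ρ u m
  map_add' a b := by simp [map_add]
  map_smul' c a := by simp [map_smul]

/-- `v` is a highest-weight vector of weight `μ`: it is homogeneous of degree `μ` and is
annihilated by every homogeneous element of `U⁺` of nonzero degree. -/
def IsHWvec (A : CMod C) (μ : Fin θ → ℤ) (v : A.M) : Prop :=
  v ∈ A.grM μ ∧
  ∀ ν : Fin θ → ℤ, ν ≠ 0 → ∀ u ∈ Subalgebra.toSubmodule C.Up ⊓ C.grade ν, A.ρ u v = 0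

/-- A simple object of `C_k`. -/
def CMod.IsSimpleObj (A : CMod C) : Prop :=
  (∃ m : A.M, m ≠ 0) ∧
  ∀ p : Submodule k A.M, A.gradedSub p → A.stable p → p = ⊥ ∨ p = ⊤

/-- `A` is (isomorphic to) the simple module `L(μ)`: it is simple and has a nonzero
highest-weight vector of weight `μ`. -/
def IsHWSimple (μ : Fin θ → ℤ) (A : CMod C) : Prop :=
  A.IsSimpleObj ∧ ∃ v : A.M, v ≠ 0 ∧ IsHWvec A μ v

/-- `Z` together with `m ∈ Z` is (a realization of) the Verma module `Z(μ)`: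
`m` is a highest-weight vector of weight `μ` and the action map `U⁻ → Z`, `a ↦ a·m`,
is a linear isomorphism. -/
def IsVerma (μ : Fin θ → ℤ) (Z : CMod C) (m : Z.M) : Prop :=
  IsHWvec Z μ m ∧ Function.Bijective ((actVec Z m).comp C.Um.val.toLinearMap)

/-- Isomorphism in `C_k`. -/
def CIso (A B : CMod C) : Prop :=
  ∃ f : A.M →ₗ[k] B.M, IsCHom A B f ∧ Function.Bijective f

/-- The subquotient `p/q` of `A` is isomorphic in `C_k` to `B`: there is a surjective
`U`-equivariant degree-preserving linear map `p → B` whose kernel is exactly `q`. -/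
def SubquotIso (A : CMod C) (p q : Submodule k A.M) (B : CMod C) : Prop :=
  ∃ f : ↥p →ₗ[k] B.M,
    Function.Surjective f ∧
    (∀ x : ↥p, f x = 0 ↔ (x : A.M) ∈ q) ∧
    (∀ (u : C.U) (x : ↥p) (h : A.ρ u (x : A.M) ∈ p), f ⟨A.ρ u (x : A.M), h⟩ = B.ρ u (f x)) ∧
    (∀ (ν : Fin θ → ℤ) (x : ↥p), (x : A.M) ∈ A.grM ν → f x ∈ B.grM ν)

/-- A composition series of `A` in `C_k` (by graded `U`-submodules with simple
subquotients). -/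
structure IsCompSeries (A : CMod C) (r : ℕ) (F : Fin (r + 1) → Submodule k A.M) : Prop where
  mono : Monotone F
  bot : F 0 = ⊥
  top : F (Fin.last r) = ⊤
  graded : ∀ i, A.gradedSub (F i)
  stable : ∀ i, A.stable (F i)
  simpleQuot : ∀ i : Fin r, ∃ S : CMod C,
    S.IsSimpleObj ∧ SubquotIso A (F i.succ) (F i.castSucc) S

/-- `[A : L] = n`: some (equivalently, by Jordan–Hölder, any) composition series of `A`
has exactly `n` factors isomorphic to `L`. -/
def HasMult (A L : CMod C) (n : ℕ) : Prop :=
  ∃ (r : ℕ) (F : Fin (r + 1) → Submodule k A.M), IsCompSeries A r F ∧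
    n = Nat.card {i : Fin r // SubquotIso A (F i.succ) (F i.castSucc) L}

/-- Projective object of `C_k`. -/
def CProjective (P : CMod C) : Prop :=
  ∀ (A B : CMod C) (g : A.M →ₗ[k] B.M), IsCHom A B g → Function.Surjective g →
    ∀ f : P.M →ₗ[k] B.M, IsCHom P B f →
      ∃ h : P.M →ₗ[k] A.M, IsCHom P A h ∧ g ∘ₗ h = f

/-- A simple (graded, `U`-stable) submodule. -/
def CMod.IsSimpleSub (A : CMod C) (p : Submodule k A.M) : Prop :=
  p ≠ ⊥ ∧ A.gradedSub p ∧ A.stable p ∧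
    ∀ q ≤ p, A.gradedSub q → A.stable q → q = ⊥ ∨ q = p

/-- The socle: the sum of all simple graded `U`-submodules. -/
def csocle (A : CMod C) : Submodule k A.M :=
  sSup {p : Submodule k A.M | A.IsSimpleSub p}

/-- The antiautomorphism `τ` of `U`. -/
structure TauData (C : AJSCtx k θ) where
  /-- the antiautomorphism, as a linear map -/
  τ : C.U →ₗ[k] C.U
  τ_one : τ 1 = 1
  τ_mul : ∀ a b : C.U, τ (a * b) = τ b * τ a
  τ_invol : ∀ a : C.U, τ (τ a) = a
  τ_fix : ∀ s : C.U0, τ (s : C.U) = (s : C.U)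
  τ_Up : Submodule.map τ (Subalgebra.toSubmodule C.Up) = Subalgebra.toSubmodule C.Um
  τ_deg : ∀ ν : Fin θ → ℤ, ∀ u ∈ C.grade ν, τ u ∈ C.grade (-ν)

/-- `B` is (a realization of) the `τ`-twisted dual `A^τ`: there is a perfect pairing
`B × A → k`, vanishing between distinct homogeneous components, with
`⟨u·b, a⟩ = ⟨b, τ(u)·a⟩`. -/
def IsTauDual (T : TauData C) (A B : CMod C) : Prop :=
  ∃ pr : B.M →ₗ[k] A.M →ₗ[k] k,
    Function.Bijective pr ∧
    (∀ (u : C.U) (b : B.M) (a : A.M), pr (B.ρ u b) a = pr b (A.ρ (T.τ u) a)) ∧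
    (∀ lam ν : Fin θ → ℤ, lam ≠ ν → ∀ b ∈ B.grM lam, ∀ a ∈ A.grM ν, pr b a = 0)

/-- The sum of all graded `U`-submodules `N` of `Z` with `N_μ = 0`. -/
def vermaRad (Z : CMod C) (μ : Fin θ → ℤ) : Submodule k Z.M :=
  sSup {N : Submodule k Z.M | Z.gradedSub N ∧ Z.stable N ∧ N ⊓ Z.grM μ = ⊥}

/-!
A nonzero object has a weight `μ` that is maximal for the partial order of `ℤ^θ`, and a nonzero
vector `v` of that weight is killed by the homogeneous elements of `U⁺` of nonzero degree. By the
triangular decomposition, `u • v = vermaRep μ u • v` with `vermaRep μ u ∈ U⁻` independent of the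
object, so the degree-`μ` component of `u • v` is `hwCoeff μ u • v`. In a simple object `v`
generates, hence all weights are `≤ μ` (which separates different `μ`), and comparing degree-`μ`
components shows that two simple objects of highest weight `μ` have the same annihilator of `v`,
hence are isomorphic. For existence, `U` modulo the left ideal `{u | hwCoeff μ (U u) = 0}` is a
simple object of highest weight `μ`.
-/

section Graded

open DirectSum

variable {ι V W X : Type*} [DecidableEq ι] [AddCommGroup V] [Module k V] [AddCommGroup W]
  [Module k W] [AddCommGroup X] [Module k X]

theorem LinearMap.exists_comp_eq_of_ker_le (f : V →ₗ[k] W) (hf : Function.Surjective f)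
    (g : V →ₗ[k] X) (h : LinearMap.ker f ≤ LinearMap.ker g) : ∃ P : W →ₗ[k] X, P ∘ₗ f = g := by
  obtain ⟨s, hs⟩ := f.exists_rightInverse_of_surjective (LinearMap.range_eq_top.2 hf)
  refine ⟨g ∘ₗ s, LinearMap.ext fun x => ?_⟩
  have hx : s (f x) - x ∈ LinearMap.ker f := by
    simp [← LinearMap.comp_apply f s, hs]
  simpa [sub_eq_zero] using h hx

variable (ℳ : ι → Submodule k V) [Decomposition ℳ]

noncomputable def gradedProj (i : ι) : V →ₗ[k] V :=
  (ℳ i).subtype ∘ₗ component k ι (fun i => ℳ i) i ∘ₗ (decomposeLinearEquiv ℳ).toLinearMap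

variable {ℳ}

theorem gradedProj_apply (i : ι) (v : V) : gradedProj ℳ i v = decompose ℳ v i := rfl

theorem gradedProj_mem (i : ι) (v : V) : gradedProj ℳ i v ∈ ℳ i := (decompose ℳ v i).2

theorem gradedProj_of_mem {i : ι} {v : V} (hv : v ∈ ℳ i) : gradedProj ℳ i v = v :=
  decompose_of_mem_same ℳ hv

theorem gradedProj_of_mem_ne {i j : ι} {v : V} (hv : v ∈ ℳ j) (hij : j ≠ i) :
    gradedProj ℳ i v = 0 :=
  decompose_of_mem_ne ℳ hv hij

theorem gradedProj_idem (i : ι) (v : V) : gradedProj ℳ i (gradedProj ℳ i v) = gradedProj ℳ i v :=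
  gradedProj_of_mem (gradedProj_mem i v)

theorem gradedProj_of_mem_eq_ite {i j : ι} {v : V} (hv : v ∈ ℳ j) :
    gradedProj ℳ i v = if j = i then v else 0 := by
  split_ifs with h
  · exact h ▸ gradedProj_of_mem hv
  · exact gradedProj_of_mem_ne hv h

theorem linearMap_ext_of_grade {f g : V →ₗ[k] W} (h : ∀ i, ∀ v ∈ ℳ i, f v = g v) : f = g :=
  decompose_lhom_ext ℳ fun i => LinearMap.ext fun v => h i v v.2

theorem isHomogeneous_iff_eq_iSup_inf (p : Submodule k V) :
    SetLike.IsHomogeneous ℳ p ↔ p = ⨆ i, p ⊓ ℳ i := by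
  classical
  constructor
  · intro hp
    refine le_antisymm (fun v hv => ?_) (iSup_le fun i => inf_le_left)
    rw [← sum_support_decompose ℳ v]
    exact Submodule.sum_mem _ fun i _ =>
      Submodule.mem_iSup_of_mem i ⟨hp i hv, (decompose ℳ v i).2⟩
  · intro hp i v hv
    change gradedProj ℳ i v ∈ p
    rw [hp] at hv
    induction hv using Submodule.iSup_induction' with
    | mem j w hw =>
      rw [gradedProj_of_mem_eq_ite hw.2]
      split_ifs
      exacts [hw.1, p.zero_mem]
    | zero => simp
    | add x y _ _ hx hy => rw [map_add]; exact p.add_mem hx hy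

theorem isInternal_map_of_surjective {ι' : Type*} [DecidableEq ι'] (e : ι' ≃ ι) (f : V →ₗ[k] W)
    (hf : Function.Surjective f) (hker : SetLike.IsHomogeneous ℳ (LinearMap.ker f)) :
    IsInternal fun j => (ℳ (e j)).map f := by
  refine isInternal_submodule_of_iSupIndep_of_iSup_eq_top (fun j => ?_) ?_
  · obtain ⟨P, hP⟩ := f.exists_comp_eq_of_ker_le hf (f ∘ₗ gradedProj ℳ (e j)) fun v hv =>
      hker (e j) hv
    have hP' : ∀ v, P (f v) = f (gradedProj ℳ (e j) v) := fun v => LinearMap.congr_fun hP v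
    refine Submodule.disjoint_def.2 fun x hx hx' => ?_
    obtain ⟨v, hv, rfl⟩ := hx
    have hvanish : (⨆ j', ⨆ (_ : j' ≠ j), (ℳ (e j')).map f) ≤ LinearMap.ker P :=
      iSup₂_le fun j' hj' => by
        rintro _ ⟨w, hw, rfl⟩
        rw [LinearMap.mem_ker, hP', gradedProj_of_mem_ne hw (e.injective.ne hj'), map_zero]
    rw [← gradedProj_of_mem hv, ← hP']
    exact hvanish hx'
  · rw [← Submodule.map_iSup, e.iSup_comp (g := fun i => ℳ i),
      (Decomposition.isInternal ℳ).submodule_iSup_eq_top, Submodule.map_top,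
      LinearMap.range_eq_top.2 hf]

end Graded

namespace AJSCtx

open DirectSum TensorProduct

variable (C : AJSCtx k θ)

noncomputable instance gradedAlgebra : GradedAlgebra C.grade :=
  { C.internal.chooseDecomposition with
    one_mem := C.one_mem
    mul_mem := fun _ _ _ _ => C.mul_mem }

instance nontrivial : Nontrivial C.U := by
  refine ⟨⟨1, 0, fun h => one_ne_zero (α := k) ?_⟩⟩
  have h0 : (1 : C.U0) = 0 := Subtype.ext h
  simpa [h0] using (map_one C.π).symm

theorem isHomogeneous_Up : SetLike.IsHomogeneous C.grade (Subalgebra.toSubmodule C.Up) :=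
  (isHomogeneous_iff_eq_iSup_inf _).2 C.Up_graded

theorem isHomogeneous_Um : SetLike.IsHomogeneous C.grade (Subalgebra.toSubmodule C.Um) :=
  (isHomogeneous_iff_eq_iSup_inf _).2 C.Um_graded

theorem nonneg_of_mem_Up {w : C.U} (hw : w ∈ C.Up) {ω : Fin θ → ℤ} (hω : w ∈ C.grade ω)
    (hw0 : w ≠ 0) : 0 ≤ ω :=
  C.Up_pos ω ((Submodule.ne_bot_iff _).2 ⟨w, ⟨hw, hω⟩, hw0⟩)

theorem nonpos_of_mem_Um {a : C.U} (ha : a ∈ C.Um) {α : Fin θ → ℤ} (hα : a ∈ C.grade α)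
    (ha0 : a ≠ 0) : α ≤ 0 :=
  C.Um_neg α ((Submodule.ne_bot_iff _).2 ⟨a, ⟨ha, hα⟩, ha0⟩)

noncomputable def coeffOne {X : Type*} [AddCommGroup X] [Module k X] (g : X →ₗ[k] C.U)
    (hg : ∀ x, g x ∈ Submodule.span k {(1 : C.U)}) : X →ₗ[k] k :=
  (LinearEquiv.coord k C.U 1 one_ne_zero).toLinearMap ∘ₗ g.codRestrict _ hg

theorem coeffOne_smul_one {X : Type*} [AddCommGroup X] [Module k X] (g : X →ₗ[k] C.U)
    (hg : ∀ x, g x ∈ Submodule.span k {(1 : C.U)}) (x : X) : C.coeffOne g hg x • 1 = g x :=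
  LinearEquiv.coord_apply_smul k C.U 1 one_ne_zero ⟨g x, hg x⟩

noncomputable def augmentation : C.Up →ₗ[k] k :=
  C.coeffOne (gradedProj C.grade 0 ∘ₗ C.Up.val.toLinearMap) fun w =>
    C.Up_deg0 ▸ ⟨C.isHomogeneous_Up 0 w.2, gradedProj_mem 0 _⟩

theorem augmentation_smul_one (w : C.Up) :
    C.augmentation w • 1 = gradedProj C.grade 0 (w : C.U) :=
  C.coeffOne_smul_one _ _ w

theorem eq_augmentation_smul_one {w : C.Up} (hw : (w : C.U) ∈ C.grade 0) :
    (w : C.U) = C.augmentation w • 1 := by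
  rw [augmentation_smul_one, gradedProj_of_mem hw]

theorem augmentation_eq_zero {w : C.Up} {ω : Fin θ → ℤ} (hw : (w : C.U) ∈ C.grade ω)
    (hω : ω ≠ 0) : C.augmentation w = 0 := by
  have h := C.augmentation_smul_one w
  rw [gradedProj_of_mem_ne hw hω] at h
  exact (smul_eq_zero.1 h).resolve_right one_ne_zero

theorem augmentation_one : C.augmentation 1 = 1 := by
  have h := C.eq_augmentation_smul_one (w := 1) C.one_mem
  exact smul_left_injective k one_ne_zero (by simpa using h.symm)

theorem augmentation_mul_eq_zero {w₁ w₂ : C.Up} {ω₁ ω₂ : Fin θ → ℤ}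
    (hw₁ : (w₁ : C.U) ∈ C.grade ω₁) (hw₂ : (w₂ : C.U) ∈ C.grade ω₂) (hω₂ : ω₂ ≠ 0) :
    C.augmentation (w₁ * w₂) = 0 := by
  rcases eq_or_ne w₁ 0 with rfl | h₁
  · simp
  rcases eq_or_ne w₂ 0 with rfl | h₂
  · simp
  refine C.augmentation_eq_zero (C.mul_mem hw₁ hw₂) fun h => hω₂ ?_
  exact ((add_eq_zero_iff_of_nonneg (C.nonneg_of_mem_Up w₁.2 hw₁ (by exact_mod_cast h₁))
    (C.nonneg_of_mem_Up w₂.2 hw₂ (by exact_mod_cast h₂))).1 h).2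

noncomputable def triangularEquiv : C.Um ⊗[k] (C.U0 ⊗[k] C.Up) ≃ₗ[k] C.U :=
  LinearEquiv.ofBijective _ C.triangular

theorem triangularEquiv_tmul (a : C.Um) (t : C.U0) (w : C.Up) :
    C.triangularEquiv (a ⊗ₜ (t ⊗ₜ w)) = a * (t * w) := rfl

variable {C} in
theorem linearMap_ext_triple {N : Type*} [AddCommGroup N] [Module k N] {f g : C.U →ₗ[k] N}
    (h : ∀ (a : C.Um) (t : C.U0) (w : C.Up) (α ω : Fin θ → ℤ), (a : C.U) ∈ C.grade α →
      (w : C.U) ∈ C.grade ω → f (a * (t * w)) = g (a * (t * w))) : f = g := by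
  suffices hcomp : f ∘ₗ C.triangularEquiv.toLinearMap = g ∘ₗ C.triangularEquiv.toLinearMap by
    ext u
    simpa using LinearMap.congr_fun hcomp (C.triangularEquiv.symm u)
  refine TensorProduct.ext_threefold' fun a t w => ?_
  suffices key : ∀ a' ∈ Subalgebra.toSubmodule C.Um, ∀ w' ∈ Subalgebra.toSubmodule C.Up,
      f (a' * (t * w')) = g (a' * (t * w')) from key a a.2 w w.2
  intro a' ha' w' hw'
  rw [C.Um_graded] at ha'
  rw [C.Up_graded] at hw'
  induction ha' using Submodule.iSup_induction' with
  | mem α a ha =>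
    induction hw' using Submodule.iSup_induction' with
    | mem ω w hw => exact h ⟨a, ha.1⟩ t ⟨w, hw.1⟩ α ω ha.2 hw.2
    | zero => simp
    | add w₁ w₂ _ _ h₁ h₂ => simp only [mul_add, map_add, h₁, h₂]
  | zero => simp
  | add a₁ a₂ _ _ h₁ h₂ => simp only [add_mul, map_add, h₁, h₂]

section HighestWeight

variable (μ : Fin θ → ℤ)

noncomputable def hwChar : C.U0 ⊗[k] C.Up →ₗ[k] k :=
  LinearMap.mul' k k ∘ₗ
    TensorProduct.map (C.π.toLinearMap ∘ₗ (C.tilde μ).toLinearMap) C.augmentation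

/-- The projection `U → U⁻` along the left ideal defining the Verma module `Z(μ)`: for a highest
weight vector `v` of weight `μ` in any object, `u • v = vermaRep μ u • v`. -/
noncomputable def vermaRep : C.U →ₗ[k] C.U :=
  C.Um.val.toLinearMap ∘ₗ (TensorProduct.rid k C.Um).toLinearMap ∘ₗ
    (C.hwChar μ).lTensor C.Um ∘ₗ C.triangularEquiv.symm.toLinearMap

theorem vermaRep_triple (a : C.Um) (t : C.U0) (w : C.Up) :
    C.vermaRep μ (a * (t * w)) = (C.π (C.tilde μ t) * C.augmentation w) • (a : C.U) := by
  rw [← triangularEquiv_tmul]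
  simp [vermaRep, hwChar]

theorem vermaRep_mem (u : C.U) : C.vermaRep μ u ∈ C.Um := Subtype.prop _

theorem vermaRep_of_mem {a : C.U} (ha : a ∈ C.Um) : C.vermaRep μ a = a := by
  simpa [augmentation_one] using C.vermaRep_triple μ ⟨a, ha⟩ 1 1

theorem vermaRep_mul_U0 (u : C.U) (s : C.U0) :
    C.vermaRep μ (u * s) = C.π (C.tilde μ s) • C.vermaRep μ u := by
  suffices h : C.vermaRep μ ∘ₗ LinearMap.mulRight k (s : C.U) = C.π (C.tilde μ s) • C.vermaRep μ
    from LinearMap.congr_fun h u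
  refine linearMap_ext_triple fun a t w α ω _ hw => ?_
  set s' := (C.tilde ω).symm s
  have hws : (w : C.U) * s = s' * w := by rw [C.tilde_comm ω _ hw s', AlgEquiv.apply_symm_apply]
  have hmove : (a : C.U) * (t * w) * s = a * (((t * s' : C.U0) : C.U) * w) := by
    simp only [MulMemClass.coe_mul, mul_assoc, hws]
  simp only [LinearMap.comp_apply, LinearMap.mulRight_apply, LinearMap.smul_apply, hmove,
    vermaRep_triple, smul_smul]
  rcases eq_or_ne ω 0 with rfl | hω
  · simp only [s', C.tilde_zero, AlgEquiv.refl_symm, AlgEquiv.coe_refl, id, map_mul]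
    congr 1
    ring
  · simp [C.augmentation_eq_zero hw hω]

theorem vermaRep_mul_Up_eq_zero (u : C.U) {w : C.Up} {ω : Fin θ → ℤ}
    (hw : (w : C.U) ∈ C.grade ω) (hω : ω ≠ 0) : C.vermaRep μ (u * w) = 0 := by
  suffices h : C.vermaRep μ ∘ₗ LinearMap.mulRight k (w : C.U) = 0 from LinearMap.congr_fun h u
  refine linearMap_ext_triple fun a t w' α ω' _ hw' => ?_
  have hmove : (a : C.U) * (t * w') * w = a * (t * ((w' * w : C.Up) : C.U)) := by
    simp only [MulMemClass.coe_mul, mul_assoc]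
  rw [LinearMap.comp_apply, LinearMap.mulRight_apply, hmove, vermaRep_triple,
    C.augmentation_mul_eq_zero hw' hw hω, mul_zero, zero_smul, LinearMap.zero_apply]

theorem vermaRep_gradedProj (τ : Fin θ → ℤ) (u : C.U) :
    C.vermaRep μ (gradedProj C.grade τ u) = gradedProj C.grade τ (C.vermaRep μ u) := by
  suffices h : C.vermaRep μ ∘ₗ gradedProj C.grade τ = gradedProj C.grade τ ∘ₗ C.vermaRep μ
    from LinearMap.congr_fun h u
  refine linearMap_ext_triple fun a t w α ω ha hw => ?_
  have hx : (a * (t * w) : C.U) ∈ C.grade (α + ω) := by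
    simpa using C.mul_mem ha (C.mul_mem (C.U0_deg0 t.2) hw)
  have hΦx : C.vermaRep μ (a * (t * w)) ∈ C.grade (α + ω) := by
    rw [vermaRep_triple]
    rcases eq_or_ne ω 0 with rfl | hω
    · simpa using Submodule.smul_mem _ _ ha
    · simp [C.augmentation_eq_zero hw hω]
  simp only [LinearMap.comp_apply, gradedProj_of_mem_eq_ite hx, gradedProj_of_mem_eq_ite hΦx]
  split_ifs <;> simp

/-- For a highest weight vector `v` of weight `μ`, the degree-`μ` component of `u • v` is
`hwCoeff μ u • v`. -/
noncomputable def hwCoeff : C.U →ₗ[k] k :=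
  C.coeffOne (gradedProj C.grade 0 ∘ₗ C.vermaRep μ) fun u =>
    C.Um_deg0 ▸ ⟨C.isHomogeneous_Um 0 (C.vermaRep_mem μ u), gradedProj_mem 0 _⟩

theorem hwCoeff_smul_one (u : C.U) :
    C.hwCoeff μ u • 1 = gradedProj C.grade 0 (C.vermaRep μ u) :=
  C.coeffOne_smul_one _ _ u

theorem hwCoeff_eq_iff {u : C.U} {c : k} :
    C.hwCoeff μ u = c ↔ gradedProj C.grade 0 (C.vermaRep μ u) = c • 1 := by
  rw [← hwCoeff_smul_one]
  exact (smul_left_injective k one_ne_zero).eq_iff.symm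

theorem hwCoeff_one : C.hwCoeff μ 1 = 1 := by
  rw [hwCoeff_eq_iff, C.vermaRep_of_mem μ C.Um.one_mem, gradedProj_of_mem C.one_mem, one_smul]

theorem hwCoeff_mul_U0 (u : C.U) (s : C.U0) :
    C.hwCoeff μ (u * s) = C.π (C.tilde μ s) * C.hwCoeff μ u := by
  rw [hwCoeff_eq_iff, vermaRep_mul_U0, map_smul, ← hwCoeff_smul_one, smul_smul]

theorem hwCoeff_mul_Up_eq_zero (u : C.U) {w : C.Up} {ω : Fin θ → ℤ}
    (hw : (w : C.U) ∈ C.grade ω) (hω : ω ≠ 0) : C.hwCoeff μ (u * w) = 0 := by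
  rw [hwCoeff_eq_iff, C.vermaRep_mul_Up_eq_zero μ u hw hω, map_zero, zero_smul]

theorem hwCoeff_gradedProj_zero (u : C.U) :
    C.hwCoeff μ (gradedProj C.grade 0 u) = C.hwCoeff μ u := by
  rw [hwCoeff_eq_iff, vermaRep_gradedProj, gradedProj_idem, ← hwCoeff_smul_one]

theorem hwCoeff_mul_gradedProj (x u : C.U) (ν : Fin θ → ℤ) :
    C.hwCoeff μ (x * gradedProj C.grade ν u) = C.hwCoeff μ (gradedProj C.grade (-ν) x * u) := by
  rw [← hwCoeff_gradedProj_zero, ← C.hwCoeff_gradedProj_zero μ (_ * u), ← neg_add_cancel ν]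
  simp only [gradedProj_apply]
  rw [coe_decompose_mul_add_of_right_mem C.grade (decompose C.grade u ν).2,
    coe_decompose_mul_add_of_left_mem C.grade (decompose C.grade x (-ν)).2]

/-- `L(μ)` is realized as `U ⧸ simpleAnn μ`, the quotient of `Z(μ)` by its largest graded
submodule with no component of degree `μ`. -/
def simpleAnn : Submodule C.U C.U where
  carrier := {u | ∀ x, C.hwCoeff μ (x * u) = 0}
  add_mem' ha hb x := by simp [mul_add, ha x, hb x]
  zero_mem' x := by simp
  smul_mem' c u hu x := by simpa [mul_assoc] using hu (x * c)

noncomputable def simpleMk : C.U →ₗ[k] C.U ⧸ C.simpleAnn μ :=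
  (C.simpleAnn μ).mkQ.restrictScalars k

theorem simpleMk_eq_zero {u : C.U} : C.simpleMk μ u = 0 ↔ u ∈ C.simpleAnn μ :=
  Submodule.Quotient.mk_eq_zero _

theorem simpleMk_surjective : Function.Surjective (C.simpleMk μ) :=
  Submodule.Quotient.mk_surjective _

theorem isHomogeneous_ker_simpleMk :
    SetLike.IsHomogeneous C.grade (LinearMap.ker (C.simpleMk μ)) := by
  intro ν u hu
  change gradedProj C.grade ν u ∈ _
  rw [LinearMap.mem_ker, simpleMk_eq_zero] at hu ⊢
  intro x
  rw [hwCoeff_mul_gradedProj]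
  exact hu _

theorem simpleMk_vermaRep (u : C.U) : C.simpleMk μ (C.vermaRep μ u) = C.simpleMk μ u := by
  rw [eq_comm, ← sub_eq_zero, ← map_sub, simpleMk_eq_zero]
  intro x
  suffices h : C.hwCoeff μ ∘ₗ LinearMap.mulLeft k x =
      C.hwCoeff μ ∘ₗ LinearMap.mulLeft k x ∘ₗ C.vermaRep μ by
    simpa [mul_sub, sub_eq_zero] using LinearMap.congr_fun h u
  refine linearMap_ext_triple fun a t w α ω _ hw => ?_
  simp only [LinearMap.comp_apply, LinearMap.mulLeft_apply, vermaRep_triple, map_smul,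
    smul_eq_mul]
  rcases eq_or_ne ω 0 with rfl | hω
  · rw [C.eq_augmentation_smul_one hw, mul_smul_comm, mul_one, mul_smul_comm, mul_smul_comm,
      map_smul, ← mul_assoc, hwCoeff_mul_U0, smul_eq_mul]
    ring
  · rw [← mul_assoc, ← mul_assoc, C.hwCoeff_mul_Up_eq_zero μ _ hw hω,
      C.augmentation_eq_zero hw hω, mul_zero, zero_mul]

theorem simpleMk_mul_U0 (u : C.U) (s : C.U0) :
    C.simpleMk μ (u * s) = C.π (C.tilde μ s) • C.simpleMk μ u := by
  rw [← map_smul, ← sub_eq_zero, ← map_sub, simpleMk_eq_zero]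
  intro x
  rw [mul_sub, map_sub, ← mul_assoc, hwCoeff_mul_U0, mul_smul_comm, map_smul, smul_eq_mul,
    sub_self]

end HighestWeight

end AJSCtx

@[simp]
theorem actVec_apply (A : CMod C) (v : A.M) (u : C.U) : actVec A v u = A.ρ u v := rfl

namespace CMod

open DirectSum

variable (A : CMod C)

noncomputable instance decomposition : Decomposition A.grM := A.internal.chooseDecomposition

theorem gradedSub_iff_isHomogeneous (p : Submodule k A.M) :
    A.gradedSub p ↔ SetLike.IsHomogeneous A.grM p :=
  (isHomogeneous_iff_eq_iSup_inf p).symm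

variable {A}

theorem gradedProj_act {μ : Fin θ → ℤ} {v : A.M} (hv : v ∈ A.grM μ) (ν : Fin θ → ℤ) (u : C.U) :
    gradedProj A.grM ν (A.ρ u v) = A.ρ (gradedProj C.grade (ν - μ) u) v := by
  suffices h : gradedProj A.grM ν ∘ₗ actVec A v = actVec A v ∘ₗ gradedProj C.grade (ν - μ)
    from LinearMap.congr_fun h u
  refine linearMap_ext_of_grade (ℳ := C.grade) fun τ x hx => ?_
  simp only [LinearMap.comp_apply, actVec_apply, gradedProj_of_mem_eq_ite hx,
    gradedProj_of_mem_eq_ite (A.act_graded τ μ x v hx hv), eq_sub_iff_add_eq]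
  split_ifs <;> simp

theorem gradedSub_range_actVec {μ : Fin θ → ℤ} {v : A.M} (hv : v ∈ A.grM μ) :
    A.gradedSub (LinearMap.range (actVec A v)) := by
  rw [gradedSub_iff_isHomogeneous]
  rintro ν _ ⟨u, rfl⟩
  exact ⟨_, (gradedProj_act hv ν u).symm⟩

theorem stable_range_actVec (v : A.M) : A.stable (LinearMap.range (actVec A v)) := by
  rintro u _ ⟨x, rfl⟩
  exact ⟨u * x, by simp⟩

theorem range_actVec_eq_top (hA : A.IsSimpleObj) {μ : Fin θ → ℤ} {v : A.M} (hv : v ∈ A.grM μ)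
    (hv0 : v ≠ 0) : LinearMap.range (actVec A v) = ⊤ := by
  refine (hA.2 _ (gradedSub_range_actVec hv) (stable_range_actVec v)).resolve_left fun h => hv0 ?_
  have hmem : v ∈ LinearMap.range (actVec A v) := ⟨1, by simp⟩
  simpa [h] using hmem

theorem exists_isHWvec (hA : ∃ m : A.M, m ≠ 0) : ∃ μ v, v ≠ 0 ∧ IsHWvec A μ v := by
  set weights := {ν | A.grM ν ≠ ⊥}
  have hfin : weights.Finite := Submodule.finite_ne_bot_of_iSupIndep A.internal.submodule_iSupIndep
  have hne : weights.Nonempty := by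
    by_contra h
    obtain ⟨m, hm⟩ := hA
    have hbot : ⨆ ν, A.grM ν = ⊥ :=
      iSup_eq_bot.2 fun ν => not_ne_iff.1 fun hν => h ⟨ν, hν⟩
    rw [A.internal.submodule_iSup_eq_top] at hbot
    exact hm ((Submodule.mem_bot k).1 (hbot ▸ Submodule.mem_top))
  obtain ⟨μ, hμ⟩ := hfin.exists_maximal hne
  obtain ⟨v, hvμ, hv0⟩ := (Submodule.ne_bot_iff _).1 hμ.prop
  refine ⟨μ, v, hv0, hvμ, fun ν hν u hu => ?_⟩
  rcases eq_or_ne u 0 with rfl | hu0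
  · simp
  have hle : μ ≤ ν + μ := le_add_of_nonneg_left (C.nonneg_of_mem_Up hu.1 hu.2 hu0)
  have hbot : A.grM (ν + μ) = ⊥ := by
    by_contra h
    exact hν (add_eq_right.1 (le_antisymm (hμ.2 h hle) hle))
  simpa [hbot] using A.act_graded ν μ u v hu.2 hvμ

end CMod

namespace IsHWvec

open CMod

variable {A B : CMod C} {μ : Fin θ → ℤ} {v : A.M}

theorem act_eq_act_vermaRep (hv : IsHWvec A μ v) (u : C.U) :
    A.ρ u v = A.ρ (C.vermaRep μ u) v := by
  suffices h : actVec A v = actVec A v ∘ₗ C.vermaRep μ from LinearMap.congr_fun h u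
  refine AJSCtx.linearMap_ext_triple fun a t w α ω _ hw => ?_
  simp only [LinearMap.comp_apply, actVec_apply, AJSCtx.vermaRep_triple, map_smul, map_mul,
    Module.End.mul_apply]
  rcases eq_or_ne ω 0 with rfl | hω
  · rw [C.eq_augmentation_smul_one hw, map_smul, map_one, LinearMap.smul_apply,
      Module.End.one_apply, map_smul, A.act_U0 t μ v hv.1, map_smul, map_smul, smul_smul,
      mul_comm]
  · rw [hv.2 ω hω w ⟨w.2, hw⟩, C.augmentation_eq_zero hw hω]
    simp

theorem gradedProj_weight_act (hv : IsHWvec A μ v) (u : C.U) :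
    gradedProj A.grM μ (A.ρ u v) = C.hwCoeff μ u • v := by
  rw [hv.act_eq_act_vermaRep, CMod.gradedProj_act hv.1, sub_self, ← C.hwCoeff_smul_one, map_smul,
    map_one, LinearMap.smul_apply, Module.End.one_apply]

theorem weight_le (hv : IsHWvec A μ v) (hA : A.IsSimpleObj) (hv0 : v ≠ 0) {ν : Fin θ → ℤ}
    {m : A.M} (hm : m ∈ A.grM ν) (hm0 : m ≠ 0) : ν ≤ μ := by
  obtain ⟨u, rfl⟩ := LinearMap.range_eq_top.1 (range_actVec_eq_top hA hv.1 hv0) m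
  rw [actVec_apply, hv.act_eq_act_vermaRep] at hm hm0
  rw [← gradedProj_of_mem hm, CMod.gradedProj_act hv.1] at hm0
  have hne : gradedProj C.grade (ν - μ) (C.vermaRep μ u) ≠ 0 := fun h => hm0 (by simp [h])
  exact sub_nonpos.1 (C.nonpos_of_mem_Um (C.isHomogeneous_Um _ (C.vermaRep_mem μ u))
    (gradedProj_mem _ _) hne)

theorem weight_eq (hv : IsHWvec A μ v) (hA : A.IsSimpleObj) (hv0 : v ≠ 0) {lam : Fin θ → ℤ}
    {w : A.M} (hw : IsHWvec A lam w) (hw0 : w ≠ 0) : μ = lam :=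
  le_antisymm (hw.weight_le hA hw0 hv.1 hv0) (hv.weight_le hA hv0 hw.1 hw0)

theorem map (hv : IsHWvec A μ v) {f : A.M →ₗ[k] B.M} (hf : IsCHom A B f) :
    IsHWvec B μ (f v) :=
  ⟨hf.2 μ v hv.1, fun ν hν u hu => by rw [← hf.1, hv.2 ν hν u hu, map_zero]⟩

theorem ker_actVec_le (hv : IsHWvec A μ v) (hv0 : v ≠ 0) (hB : B.IsSimpleObj) {w : B.M}
    (hw : IsHWvec B μ w) : LinearMap.ker (actVec A v) ≤ LinearMap.ker (actVec B w) := by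
  set N := (LinearMap.ker (actVec A v)).map (actVec B w)
  have hNgr : B.gradedSub N := by
    rw [gradedSub_iff_isHomogeneous]
    rintro ν _ ⟨u, hu, rfl⟩
    refine ⟨gradedProj C.grade (ν - μ) u, ?_, (CMod.gradedProj_act hw.1 ν u).symm⟩
    simp_all [← CMod.gradedProj_act hv.1]
  have hNst : B.stable N := by
    rintro u _ ⟨x, hx, rfl⟩
    exact ⟨u * x, by simp_all, by simp⟩
  intro u hu
  rcases hB.2 N hNgr hNst with hN | hN
  · have h : actVec B w u ∈ N := Submodule.mem_map_of_mem hu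
    rw [hN] at h
    simpa using h
  -- Here `x • w = w` with `x • v = 0`, and the degree-`μ` parts of both force `w = 0`.
  · obtain ⟨x, hx, hxw⟩ := hN.symm ▸ Submodule.mem_top (x := w)
    rw [SetLike.mem_coe, LinearMap.mem_ker, actVec_apply] at hx
    rw [actVec_apply] at hxw
    have hcoeff : C.hwCoeff μ x = 0 := by
      have h := hv.gradedProj_weight_act x
      rw [hx, map_zero] at h
      exact (smul_eq_zero.1 h.symm).resolve_right hv0
    have hw0 := hw.gradedProj_weight_act x
    rw [hxw, gradedProj_of_mem hw.1, hcoeff, zero_smul] at hw0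
    simp [hw0]

end IsHWvec

theorem cIso_of_isHWvec {L L' : CMod C} (hL : L.IsSimpleObj) (hL' : L'.IsSimpleObj)
    {μ : Fin θ → ℤ} {v : L.M} {v' : L'.M} (hv0 : v ≠ 0) (hv'0 : v' ≠ 0) (hv : IsHWvec L μ v)
    (hv' : IsHWvec L' μ v') : CIso L L' := by
  have hker : LinearMap.ker (actVec L v) = LinearMap.ker (actVec L' v') :=
    le_antisymm (hv.ker_actVec_le hv0 hL' hv') (hv'.ker_actVec_le hv'0 hL hv)
  have hsurj := LinearMap.range_eq_top.1 (CMod.range_actVec_eq_top hL hv.1 hv0)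
  have hsurj' := LinearMap.range_eq_top.1 (CMod.range_actVec_eq_top hL' hv'.1 hv'0)
  obtain ⟨f, hf⟩ := (actVec L v).exists_comp_eq_of_ker_le hsurj (actVec L' v') hker.le
  have hfv : ∀ x, f (L.ρ x v) = L'.ρ x v' := LinearMap.congr_fun hf
  refine ⟨f, ⟨fun u m => ?_, fun ν m hm => ?_⟩, ?_, fun m' => ?_⟩
  · obtain ⟨x, rfl⟩ := hsurj m
    rw [actVec_apply, ← Module.End.mul_apply, ← map_mul, hfv, hfv, map_mul, Module.End.mul_apply]
  · obtain ⟨x, rfl⟩ := hsurj m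
    rw [actVec_apply] at hm ⊢
    rw [← gradedProj_of_mem hm, CMod.gradedProj_act hv.1, hfv]
    simpa using L'.act_graded (ν - μ) μ _ v' (gradedProj_mem _ x) hv'.1
  · rw [← LinearMap.ker_eq_bot, eq_bot_iff]
    intro m hm
    obtain ⟨x, rfl⟩ := hsurj m
    rw [LinearMap.mem_ker, actVec_apply, hfv] at hm
    have hx : x ∈ LinearMap.ker (actVec L v) := hker ▸ hm
    simpa using hx
  · obtain ⟨x, rfl⟩ := hsurj' m'
    exact ⟨L.ρ x v, hfv x⟩

namespace AJSCtx

variable (C : AJSCtx k θ) (μ : Fin θ → ℤ)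

noncomputable def simpleModule : CMod C where
  M := C.U ⧸ C.simpleAnn μ
  ρ := Algebra.lsmul k k _
  grM ν := (C.grade (ν - μ)).map (C.simpleMk μ)
  internal := isInternal_map_of_surjective (Equiv.subRight μ) _ (C.simpleMk_surjective μ)
    (C.isHomogeneous_ker_simpleMk μ)
  fin := by
    have := C.finUm
    refine Module.Finite.of_surjective (C.simpleMk μ ∘ₗ C.Um.val.toLinearMap) fun m => ?_
    obtain ⟨u, rfl⟩ := C.simpleMk_surjective μ m
    exact ⟨⟨_, C.vermaRep_mem μ u⟩, C.simpleMk_vermaRep μ u⟩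
  act_graded := by
    rintro ν ν' u _ hu ⟨y, hy, rfl⟩
    refine ⟨u * y, ?_, rfl⟩
    simpa [add_sub_assoc] using C.mul_mem hu hy
  act_U0 := by
    rintro s ν _ ⟨y, hy, rfl⟩
    have htilde := C.tilde_add (ν - μ) μ
    rw [sub_add_cancel] at htilde
    change C.simpleMk μ (s * y) = _
    rw [C.tilde_comm _ y hy s, simpleMk_mul_U0, htilde]
    rfl

theorem simpleModule_ρ_simpleMk (u y : C.U) :
    (C.simpleModule μ).ρ u (C.simpleMk μ y) = C.simpleMk μ (u * y) := rfl

theorem simpleMk_eq_ρ_simpleMk_one (u : C.U) :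
    C.simpleMk μ u = (C.simpleModule μ).ρ u (C.simpleMk μ 1) := by
  rw [simpleModule_ρ_simpleMk, mul_one]

theorem isHWvec_simpleMk_one : IsHWvec (C.simpleModule μ) μ (C.simpleMk μ 1) := by
  refine ⟨⟨1, by simpa using C.one_mem, rfl⟩, fun ν hν u hu => ?_⟩
  rw [simpleModule_ρ_simpleMk, mul_one]
  exact (C.simpleMk_eq_zero μ).2 fun x => C.hwCoeff_mul_Up_eq_zero μ x (w := ⟨u, hu.1⟩) hu.2 hν

theorem simpleMk_one_ne_zero : C.simpleMk μ 1 ≠ 0 := fun h => by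
  simpa [hwCoeff_one] using (C.simpleMk_eq_zero μ).1 h 1

theorem simpleModule_isHWSimple : IsHWSimple μ (C.simpleModule μ) := by
  set v := C.simpleMk μ 1
  have hv := C.isHWvec_simpleMk_one μ
  refine ⟨⟨⟨v, C.simpleMk_one_ne_zero μ⟩, fun p hp hst => ?_⟩, v, C.simpleMk_one_ne_zero μ, hv⟩
  refine or_iff_not_imp_left.2 fun hp0 => ?_
  obtain ⟨m, hm, hm0⟩ := (Submodule.ne_bot_iff p).1 hp0
  obtain ⟨u, rfl⟩ := C.simpleMk_surjective μ m
  obtain ⟨x, hx⟩ : ∃ x, C.hwCoeff μ (x * u) ≠ 0 := by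
    by_contra! h
    exact hm0 ((C.simpleMk_eq_zero μ).2 h)
  have hvp : v ∈ p := by
    have hxu := (CMod.gradedSub_iff_isHomogeneous _ p).1 hp μ (hst x _ hm)
    change gradedProj _ μ _ ∈ p at hxu
    rw [simpleModule_ρ_simpleMk, simpleMk_eq_ρ_simpleMk_one, hv.gradedProj_weight_act] at hxu
    exact (p.smul_mem_iff hx).1 hxu
  refine eq_top_iff.2 fun m _ => ?_
  obtain ⟨y, rfl⟩ := C.simpleMk_surjective μ m
  rw [simpleMk_eq_ρ_simpleMk_one]
  exact hst y v hvp

end AJSCtx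

theorem classification_of_simples_general {k : Type} [Field k]
    {θ : ℕ} (C : AJSCtx k θ) :
    (∀ L : CMod C, L.IsSimpleObj → ∃ (μ : Fin θ → ℤ) (v : L.M), v ≠ 0 ∧ IsHWvec L μ v ∧
      ∀ L' : CMod C, IsHWSimple μ L' → CIso L L') ∧
    (∀ (μ lam : Fin θ → ℤ) (L L' : CMod C), IsHWSimple μ L → IsHWSimple lam L' →
      (CIso L L' ↔ μ = lam)) ∧
    (∀ μ : Fin θ → ℤ, ∃ L : CMod C, IsHWSimple μ L) := by
  refine ⟨fun L hL => ?_, fun μ lam L L' hL hL' => ?_, fun μ => ⟨_, C.simpleModule_isHWSimple μ⟩⟩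
  · obtain ⟨μ, v, hv0, hv⟩ := L.exists_isHWvec hL.1
    exact ⟨μ, v, hv0, hv, fun L' ⟨hL', v', hv'0, hv'⟩ => cIso_of_isHWvec hL hL' hv0 hv'0 hv hv'⟩
  · obtain ⟨hLs, v, hv0, hv⟩ := hL
    obtain ⟨hL's, v', hv'0, hv'⟩ := hL'
    refine ⟨fun ⟨f, hf, hfb⟩ => ?_, fun h => cIso_of_isHWvec hLs hL's hv0 hv'0 hv (h ▸ hv')⟩
    exact (hv.map hf).weight_eq hL's (fun h => hv0 (hfb.1 (by rw [h, map_zero]))) hv' hv'0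

/-- **Classification of simple objects of `C_k`.** Every simple object contains a nonzero
highest-weight vector of some weight `μ` (and is then isomorphic to `L(μ)`, i.e. to any
simple highest-weight module of weight `μ`); two simple highest-weight modules of weights
`μ, λ` are isomorphic iff `μ = λ`; and every weight occurs. Thus `μ ↦ L(μ)` is a
bijection between `ℤ^θ` and the isomorphism classes of simple objects of `C_k`. -/
theorem classification_of_simples {k : Type} [Field k] [IsAlgClosed k] [CharZero k]
    {θ : ℕ} (hθ : 1 ≤ θ) (C : AJSCtx k θ) :
    (∀ L : CMod C, L.IsSimpleObj → ∃ (μ : Fin θ → ℤ) (v : L.M), v ≠ 0 ∧ IsHWvec L μ v ∧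
      ∀ L' : CMod C, IsHWSimple μ L' → CIso L L') ∧
    (∀ (μ lam : Fin θ → ℤ) (L L' : CMod C), IsHWSimple μ L → IsHWSimple lam L' →
      (CIso L L' ↔ μ = lam)) ∧
    (∀ μ : Fin θ → ℤ, ∃ L : CMod C, IsHWSimple μ L) :=
  classification_of_simples_general C
end

section
/- The category C_k has enough projectives: every object of C_k is a quotient (homomorphic image) of a projective object of C_k. -/
open scoped TensorProduct

variable {k : Type} [Field k] {θ : ℕ}

variable {C : AJSCtx k θ}

/-! `P(λ) = U ⊗_{U⁰} k_λ`, with `U⁰` acting on `k` by `s ↦ π(λ̃ s)`, is generated by `1 ⊗ 1`,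
which has weight `λ`; so morphisms `P(λ) → A` in `C_k` correspond to vectors of `A_λ`. A surjection
in `C_k` is onto on every weight space (the weight spaces are independent), hence `P(λ)` is
projective. By the triangular decomposition `U = U⁻ U⁺ U⁰`, and `U⁰` acts on `1 ⊗ 1` by scalars,
so `P(λ)` is a quotient of `U⁻ ⊗ U⁺` and is finite-dimensional. Finally, a basis of `M` made of
weight vectors `m_i ∈ M_{λ_i}` gives a surjection `⊕ᵢ P(λ_i) → M`. -/

theorem iSupIndep.eq_of_le_of_le_iSup {α ι : Type*} [CompleteLattice α] [IsModularLattice α]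
    {p q : ι → α} (hq : iSupIndep q) (hpq : ∀ i, p i ≤ q i) {j : ι} (hj : q j ≤ ⨆ i, p i) :
    p j = q j := by
  have hrest : (⨆ (i) (_ : i ≠ j), p i) ⊓ q j = ⊥ :=
    ((hq j).mono_right (iSup₂_mono fun i _ => hpq i)).symm.eq_bot
  calc p j = (p j ⊔ ⨆ (i) (_ : i ≠ j), p i) ⊓ q j := by
        rw [sup_inf_assoc_of_le _ (hpq j), hrest, sup_bot_eq]
    _ = q j := by rw [← iSup_split_single]; exact inf_eq_right.2 hj

namespace DirectSum.IsInternal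

variable {R V ι : Type*} [Ring R] [AddCommGroup V] [Module R V] [DecidableEq ι]

theorem comp_equiv {κ : Type*} [DecidableEq κ] {p : ι → Submodule R V} (hp : IsInternal p)
    (e : κ ≃ ι) : IsInternal fun j => p (e j) := by
  rw [isInternal_submodule_iff_iSupIndep_and_iSup_eq_top] at hp ⊢
  exact ⟨hp.1.comp e.injective, by rw [e.iSup_comp]; exact hp.2⟩

theorem map_mkQ {p : ι → Submodule R V} (hp : IsInternal p) {q : Submodule R V}
    (hq : q ≤ ⨆ i, q ⊓ p i) : IsInternal fun i => (p i).map q.mkQ := by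
  rw [isInternal_submodule_iff_iSupIndep_and_iSup_eq_top] at hp ⊢
  refine ⟨fun i => ?_, by rw [← Submodule.map_iSup, hp.2, Submodule.map_top, Submodule.range_mkQ]⟩
  have hq' : q ≤ q ⊓ p i ⊔ ⨆ (j) (_ : j ≠ i), p j :=
    hq.trans <| (iSup_split_single _ i).le.trans <|
      sup_le_sup_left (iSup₂_mono fun j _ => inf_le_right) _
  simp only [← Submodule.map_iSup]
  rw [Submodule.disjoint_def]
  rintro _ ⟨a, ha, rfl⟩ ⟨b, hb, hab⟩
  have hab' : a - b ∈ q := by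
    rw [← Submodule.ker_mkQ q, LinearMap.mem_ker, map_sub, hab, sub_self]
  obtain ⟨c, hc, d, hd, hcd⟩ := Submodule.mem_sup.1 (hq' hab')
  have hac : a - c = b + d := by
    rw [sub_eq_iff_eq_add', add_left_comm, hcd, add_sub_cancel]
  have hac0 : a - c = 0 :=
    Submodule.disjoint_def.1 (hp.1 i) _ (sub_mem ha hc.2) (hac ▸ add_mem hb hd)
  rw [sub_eq_zero.1 hac0]
  exact (Submodule.Quotient.mk_eq_zero q).2 hc.1

theorem submodule_pi {κ : Type*} [Finite κ] {W : κ → Type*} [∀ i, AddCommGroup (W i)]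
    [∀ i, Module R (W i)] {p : ∀ i, ι → Submodule R (W i)} (hp : ∀ i, IsInternal (p i)) :
    IsInternal fun ν => Submodule.pi Set.univ fun i => p i ν := by
  classical
  have := Fintype.ofFinite κ
  simp only [isInternal_submodule_iff_iSupIndep_and_iSup_eq_top] at hp ⊢
  refine ⟨fun ν => ?_, ?_⟩
  · have hle : (⨆ (μ) (_ : μ ≠ ν), Submodule.pi Set.univ fun i => p i μ) ≤
        Submodule.pi Set.univ fun i => ⨆ (μ) (_ : μ ≠ ν), p i μ :=
      iSup₂_le fun μ hμ x hx i _ => le_iSup₂ (f := fun μ _ => p i μ) μ hμ (hx i trivial)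
    refine Submodule.disjoint_def.2 fun x hx hx' => funext fun i => ?_
    exact Submodule.disjoint_def.1 ((hp i).1 ν) _ (hx i trivial) (hle hx' i trivial)
  · refine Submodule.eq_top_iff'.2 fun x => ?_
    rw [← Finset.univ_sum_single x]
    refine sum_mem fun i _ => ?_
    have hxi : x i ∈ ⨆ ν, p i ν := (hp i).2 ▸ Submodule.mem_top
    generalize x i = y at hxi ⊢
    induction hxi using Submodule.iSup_induction' with
    | mem ν y hy =>
      refine Submodule.mem_iSup_of_mem ν fun j _ => ?_
      rcases eq_or_ne j i with rfl | hji
      · simpa using hy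
      · simp [hji]
    | zero => simp
    | add y y' _ _ hy hy' => rw [Pi.single_add]; exact add_mem hy hy'

end DirectSum.IsInternal

theorem IsCHom.comp {A B D : CMod C} {g : B.M →ₗ[k] D.M} {f : A.M →ₗ[k] B.M}
    (hg : IsCHom B D g) (hf : IsCHom A B f) : IsCHom A D (g ∘ₗ f) :=
  ⟨fun u m => by simp only [LinearMap.comp_apply, hf.1, hg.1],
    fun ν m hm => hg.2 ν _ (hf.2 ν m hm)⟩

theorem IsCHom.map_grM_eq {A B : CMod C} {g : A.M →ₗ[k] B.M} (hg : IsCHom A B g)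
    (hsurj : Function.Surjective g) (ν : Fin θ → ℤ) : (A.grM ν).map g = B.grM ν := by
  refine B.internal.submodule_iSupIndep.eq_of_le_of_le_iSup
    (fun μ => Submodule.map_le_iff_le_comap.2 fun m hm => hg.2 μ m hm) ?_
  rw [← Submodule.map_iSup, A.internal.submodule_iSup_eq_top, Submodule.map_top,
    LinearMap.range_eq_top.2 hsurj]
  exact le_top

namespace AJSCtx

variable (C)

theorem toSubmodule_U0_mul_Up_le :
    Subalgebra.toSubmodule C.U0 * Subalgebra.toSubmodule C.Up ≤
      Subalgebra.toSubmodule C.Up * Subalgebra.toSubmodule C.U0 := by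
  refine Submodule.mul_le.2 fun s hs b hb => ?_
  rw [C.Up_graded] at hb
  induction hb using Submodule.iSup_induction' with
  | mem ν b hb =>
    rw [C.tilde_comm ν b hb.2 ⟨s, hs⟩]
    exact Submodule.mul_mem_mul hb.1 (C.tilde ν ⟨s, hs⟩).2
  | zero => simp
  | add b b' _ _ hb hb' => rw [mul_add]; exact add_mem hb hb'

theorem Um_mul_U0_mul_Up_eq_top :
    Subalgebra.toSubmodule C.Um * (Subalgebra.toSubmodule C.U0 * Subalgebra.toSubmodule C.Up) =
      ⊤ := by
  refine Submodule.eq_top_iff'.2 fun u => ?_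
  obtain ⟨t, rfl⟩ := C.triangular.surjective u
  induction t using TensorProduct.induction_on with
  | zero => simp
  | add t t' ht ht' => rw [map_add]; exact add_mem ht ht'
  | tmul a w =>
    induction w using TensorProduct.induction_on with
    | zero => simp
    | add w w' hw hw' => rw [TensorProduct.tmul_add, map_add]; exact add_mem hw hw'
    | tmul s b => simpa using Submodule.mul_mem_mul a.2 (Submodule.mul_mem_mul s.2 b.2)

/-- The left ideal `U·{s - π(λ̃ s) | s ∈ U⁰}`, so that `U ⧸ C.weightIdeal λ = U ⊗_{U⁰} k_λ`. -/
def weightIdeal (lam : Fin θ → ℤ) : Submodule k C.U :=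
  Submodule.span k
    {x | ∃ (u : C.U) (s : C.U0), x = u * ((s : C.U) - algebraMap k C.U (C.π (C.tilde lam s)))}

variable {C}

theorem mul_sub_mem_weightIdeal (lam : Fin θ → ℤ) (u : C.U) (s : C.U0) :
    u * ((s : C.U) - algebraMap k C.U (C.π (C.tilde lam s))) ∈ C.weightIdeal lam :=
  Submodule.subset_span ⟨u, s, rfl⟩

theorem weightIdeal_le_comap_mulLeft (lam : Fin θ → ℤ) (v : C.U) :
    C.weightIdeal lam ≤ (C.weightIdeal lam).comap (LinearMap.mulLeft k v) := by
  refine Submodule.span_le.2 ?_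
  rintro _ ⟨u, s, rfl⟩
  simpa [← mul_assoc] using mul_sub_mem_weightIdeal lam (v * u) s

theorem mkQ_mul_U0 (lam : Fin θ → ℤ) (u : C.U) (s : C.U0) :
    (C.weightIdeal lam).mkQ (u * s) = C.π (C.tilde lam s) • (C.weightIdeal lam).mkQ u := by
  rw [← map_smul, ← sub_eq_zero, ← map_sub, Submodule.mkQ_apply, Submodule.Quotient.mk_eq_zero,
    Algebra.smul_def, Algebra.commutes, ← mul_sub]
  exact mul_sub_mem_weightIdeal lam u s

theorem weightIdeal_le_iSup_inf_grade (lam : Fin θ → ℤ) :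
    C.weightIdeal lam ≤ ⨆ ν, C.weightIdeal lam ⊓ C.grade ν := by
  refine Submodule.span_le.2 ?_
  rintro _ ⟨u, s, rfl⟩
  have hu : u ∈ ⨆ ν, C.grade ν := C.internal.submodule_iSup_eq_top ▸ Submodule.mem_top
  have hs : (s : C.U) - algebraMap k C.U (C.π (C.tilde lam s)) ∈ C.grade 0 :=
    sub_mem (C.U0_deg0 s.2) <| by
      rw [Algebra.algebraMap_eq_smul_one]; exact Submodule.smul_mem _ _ C.one_mem
  induction hu using Submodule.iSup_induction' with
  | mem ν u hu =>
    refine Submodule.mem_iSup_of_mem ν ⟨mul_sub_mem_weightIdeal lam u s, ?_⟩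
    simpa using C.mul_mem hu hs
  | zero => simp
  | add u u' _ _ hu hu' => rw [add_mul]; exact add_mem hu hu'

theorem map_mkQ_mul_U0_le (lam : Fin θ → ℤ) (X : Submodule k C.U) :
    (X * Subalgebra.toSubmodule C.U0).map (C.weightIdeal lam).mkQ ≤
      X.map (C.weightIdeal lam).mkQ := by
  refine Submodule.map_le_iff_le_comap.2 (Submodule.mul_le.2 fun x hx s hs => ?_)
  rw [Submodule.mem_comap, show s = ((⟨s, hs⟩ : C.U0) : C.U) from rfl, mkQ_mul_U0]
  exact Submodule.smul_mem _ _ (Submodule.mem_map_of_mem hx)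

theorem finite_quotient_weightIdeal (lam : Fin θ → ℤ) :
    Module.Finite k (C.U ⧸ C.weightIdeal lam) := by
  have hfg : (Subalgebra.toSubmodule C.Um * Subalgebra.toSubmodule C.Up).FG :=
    (Module.Finite.iff_fg.1 C.finUm).mul (Module.Finite.iff_fg.1 C.finUp)
  have htop : (Subalgebra.toSubmodule C.Um * Subalgebra.toSubmodule C.Up).map
      (C.weightIdeal lam).mkQ = ⊤ := by
    refine top_le_iff.1 ?_
    calc ⊤ = (Subalgebra.toSubmodule C.Um * (Subalgebra.toSubmodule C.U0 *
            Subalgebra.toSubmodule C.Up)).map (C.weightIdeal lam).mkQ := by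
          rw [Um_mul_U0_mul_Up_eq_top, Submodule.map_top, Submodule.range_mkQ]
      _ ≤ (Subalgebra.toSubmodule C.Um * Subalgebra.toSubmodule C.Up *
            Subalgebra.toSubmodule C.U0).map (C.weightIdeal lam).mkQ := by
          rw [mul_assoc]
          exact Submodule.map_mono (mul_le_mul_right (toSubmodule_U0_mul_Up_le C) _)
      _ ≤ _ := map_mkQ_mul_U0_le lam _
  exact Module.finite_def.2 (htop ▸ hfg.map _)

variable (C)

def inducedρ (lam : Fin θ → ℤ) : C.U →ₐ[k] Module.End k (C.U ⧸ C.weightIdeal lam) where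
  toFun v := (C.weightIdeal lam).mapQ (C.weightIdeal lam) (LinearMap.mulLeft k v)
    (weightIdeal_le_comap_mulLeft lam v)
  map_one' := by apply Submodule.linearMap_qext; ext; simp
  map_mul' a b := by apply Submodule.linearMap_qext; ext; simp [Submodule.mapQ_apply]
  map_zero' := by apply Submodule.linearMap_qext; ext; simp
  map_add' a b := by apply Submodule.linearMap_qext; ext; simp [Submodule.mapQ_apply, add_mul]
  commutes' c := by
    apply Submodule.linearMap_qext; ext
    simp [Submodule.mapQ_apply, ← Algebra.smul_def, Submodule.Quotient.mk_smul]

variable {C}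

theorem inducedρ_mkQ (lam : Fin θ → ℤ) (u x : C.U) :
    C.inducedρ lam u ((C.weightIdeal lam).mkQ x) = (C.weightIdeal lam).mkQ (u * x) :=
  rfl

variable (C)

/-- `P(λ)`, graded by `P(λ)_ν = U_{ν-λ}·(1 ⊗ 1)`. It is reducible so that its carrier unfolds
to the quotient `U ⧸ C.weightIdeal λ` during elaboration. -/
@[reducible] def inducedCMod (lam : Fin θ → ℤ) : CMod C where
  M := C.U ⧸ C.weightIdeal lam
  ρ := C.inducedρ lam
  grM ν := (C.grade (ν - lam)).map (C.weightIdeal lam).mkQ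
  internal := by
    refine (C.internal.comp_equiv (Equiv.subRight lam)).map_mkQ ?_
    exact (C.weightIdeal_le_iSup_inf_grade lam).trans_eq
      ((Equiv.subRight lam).iSup_comp (g := fun ν => C.weightIdeal lam ⊓ C.grade ν)).symm
  fin := C.finite_quotient_weightIdeal lam
  act_graded := by
    rintro ν μ u _ hu ⟨x, hx, rfl⟩
    refine ⟨u * x, ?_, rfl⟩
    simpa [add_sub_assoc] using C.mul_mem hu hx
  act_U0 := by
    rintro s μ _ ⟨x, hx, rfl⟩
    rw [inducedρ_mkQ, C.tilde_comm (μ - lam) x hx s, mkQ_mul_U0, ← AlgEquiv.trans_apply,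
      ← C.tilde_add, sub_add_cancel]

variable {C}

theorem mkQ_one_mem_grM_inducedCMod (lam : Fin θ → ℤ) :
    (C.weightIdeal lam).mkQ 1 ∈ (C.inducedCMod lam).grM lam :=
  ⟨1, by simpa using C.one_mem, rfl⟩

theorem weightIdeal_le_ker_actVec {lam : Fin θ → ℤ} {A : CMod C} {m : A.M}
    (hm : m ∈ A.grM lam) : C.weightIdeal lam ≤ LinearMap.ker (actVec A m) := by
  refine Submodule.span_le.2 ?_
  rintro _ ⟨u, s, rfl⟩
  change A.ρ (u * _) m = 0
  rw [map_mul, Module.End.mul_apply, map_sub, LinearMap.sub_apply, A.act_U0 s lam m hm,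
    AlgHom.commutes, Module.algebraMap_end_apply, sub_self, map_zero]

def inducedLift {lam : Fin θ → ℤ} {A : CMod C} {m : A.M} (hm : m ∈ A.grM lam) :
    (C.inducedCMod lam).M →ₗ[k] A.M :=
  (C.weightIdeal lam).liftQ (actVec A m) (weightIdeal_le_ker_actVec hm)

theorem inducedLift_mkQ {lam : Fin θ → ℤ} {A : CMod C} {m : A.M} (hm : m ∈ A.grM lam)
    (u : C.U) : inducedLift hm ((C.weightIdeal lam).mkQ u) = A.ρ u m :=
  rfl

theorem isCHom_inducedLift {lam : Fin θ → ℤ} {A : CMod C} {m : A.M} (hm : m ∈ A.grM lam) :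
    IsCHom (C.inducedCMod lam) A (inducedLift hm) := by
  constructor
  · intro u x
    obtain ⟨v, rfl⟩ := (C.weightIdeal lam).mkQ_surjective x
    change inducedLift hm ((C.weightIdeal lam).mkQ (u * v)) = _
    rw [inducedLift_mkQ, inducedLift_mkQ, map_mul, Module.End.mul_apply]
  · rintro ν _ ⟨y, hy, rfl⟩
    rw [inducedLift_mkQ]
    simpa using A.act_graded (ν - lam) lam y m hy hm

theorem inducedCMod_hom_ext {lam : Fin θ → ℤ} {B : CMod C}
    {f g : (C.inducedCMod lam).M →ₗ[k] B.M} (hf : IsCHom (C.inducedCMod lam) B f)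
    (hg : IsCHom (C.inducedCMod lam) B g)
    (h : f ((C.weightIdeal lam).mkQ 1) = g ((C.weightIdeal lam).mkQ 1)) : f = g := by
  refine Submodule.linearMap_qext _ (LinearMap.ext fun u => ?_)
  have hu : (C.weightIdeal lam).mkQ u = (C.inducedCMod lam).ρ u ((C.weightIdeal lam).mkQ 1) := by
    change _ = C.inducedρ lam u _
    rw [inducedρ_mkQ, mul_one]
  change f _ = g _
  rw [hu, hf.1, hg.1, h]

theorem inducedCMod_projective (lam : Fin θ → ℤ) : CProjective (C.inducedCMod lam) := by
  intro A B g hg hsurj f hf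
  obtain ⟨m, hm, hgm⟩ : f ((C.weightIdeal lam).mkQ 1) ∈ (A.grM lam).map g :=
    hg.map_grM_eq hsurj lam ▸ hf.2 lam _ (mkQ_one_mem_grM_inducedCMod lam)
  refine ⟨inducedLift hm, isCHom_inducedLift hm,
    inducedCMod_hom_ext (hg.comp (isCHom_inducedLift hm)) hf ?_⟩
  rw [LinearMap.comp_apply, inducedLift_mkQ, map_one, Module.End.one_apply, hgm]

end AJSCtx

section Pi

variable {ι : Type} (A : ι → CMod C)

def piρ : C.U →ₐ[k] Module.End k (∀ i, (A i).M) where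
  toFun u := LinearMap.pi fun i => (A i).ρ u ∘ₗ LinearMap.proj i
  map_one' := by ext; simp
  map_mul' a b := by ext; simp
  map_zero' := by ext; simp
  map_add' a b := by ext; simp
  commutes' c := by ext; simp

@[reducible] def piCMod [Finite ι] : CMod C where
  M := ∀ i, (A i).M
  ρ := piρ A
  grM ν := Submodule.pi Set.univ fun i => (A i).grM ν
  internal := DirectSum.IsInternal.submodule_pi fun i => (A i).internal
  fin := by have := Fintype.ofFinite ι; infer_instance
  act_graded ν μ u m hu hm i _ := (A i).act_graded ν μ u (m i) hu (hm i trivial)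
  act_U0 s μ m hm := funext fun i => (A i).act_U0 s μ (m i) (hm i trivial)

variable {A}

theorem isCHom_comp_single [Finite ι] [DecidableEq ι] {B : CMod C}
    {f : (∀ i, (A i).M) →ₗ[k] B.M} (hf : IsCHom (piCMod A) B f) (i : ι) :
    IsCHom (A i) B (f ∘ₗ LinearMap.single k (fun j => (A j).M) i) := by
  refine ⟨fun u m => ?_, fun ν m hm => hf.2 ν _ fun j _ => ?_⟩
  · have : Pi.single i ((A i).ρ u m) = piρ A u (Pi.single i m) := by
      ext j; rcases eq_or_ne j i with rfl | hji <;> simp [piρ, *]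
    simp only [LinearMap.comp_apply, LinearMap.coe_single, this]
    exact hf.1 u _
  · rcases eq_or_ne j i with rfl | hji <;> simp [*]

theorem isCHom_lsum [Fintype ι] [DecidableEq ι] {B : CMod C} {h : ∀ i, (A i).M →ₗ[k] B.M}
    (hh : ∀ i, IsCHom (A i) B (h i)) :
    IsCHom (piCMod A) B (LinearMap.lsum k (fun i => (A i).M) k h) := by
  refine ⟨fun u x => ?_, fun ν x hx => ?_⟩
  · simp [(hh _).1, piρ]
  · simp only [LinearMap.lsum_apply, LinearMap.coe_sum, Finset.sum_apply, LinearMap.comp_apply,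
      LinearMap.proj_apply]
    exact sum_mem fun i _ => (hh i).2 ν _ (hx i trivial)

theorem piCMod_projective [Fintype ι] [DecidableEq ι] (hA : ∀ i, CProjective (A i)) :
    CProjective (piCMod A) := by
  intro X B g hg hsurj f hf
  choose h hh hgh using fun i => hA i X B g hg hsurj _ (isCHom_comp_single hf i)
  refine ⟨LinearMap.lsum k (fun i => (A i).M) k h, isCHom_lsum hh, LinearMap.pi_ext' fun i => ?_⟩
  rw [LinearMap.comp_assoc, ← hgh i]
  exact congrArg (g ∘ₗ ·) (congrFun ((LinearMap.lsum k _ k).symm_apply_apply h) i)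

end Pi

theorem AJSCtx.surjective_lsum_inducedLift {ι : Type} [Fintype ι] [DecidableEq ι] {M : CMod C}
    {deg : ι → Fin θ → ℤ} {v : ι → M.M} (hv : ∀ i, v i ∈ M.grM (deg i))
    (hspan : Submodule.span k (Set.range v) = ⊤) :
    Function.Surjective
      (LinearMap.lsum k (fun i => (C.inducedCMod (deg i)).M) k fun i => inducedLift (hv i)) := by
  refine LinearMap.range_eq_top.1 (top_le_iff.1 (hspan ▸ Submodule.span_le.2 ?_))
  rintro _ ⟨i, rfl⟩
  refine ⟨Pi.single i ((C.weightIdeal (deg i)).mkQ 1), ?_⟩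
  rw [LinearMap.lsum_piSingle, inducedLift_mkQ, map_one, Module.End.one_apply]

theorem enough_projectives_general {k : Type} [Field k]
    {θ : ℕ} (C : AJSCtx k θ) (M : CMod C) :
    ∃ (P : CMod C) (f : P.M →ₗ[k] M.M),
      CProjective P ∧ IsCHom P M f ∧ Function.Surjective f := by
  classical
  let ι := Σ ν, Module.Free.ChooseBasisIndex k (M.grM ν)
  let b : Module.Basis ι k M.M :=
    M.internal.collectedBasis fun ν => Module.Free.chooseBasis k (M.grM ν)
  have hb (i : ι) : b i ∈ M.grM i.1 := M.internal.collectedBasis_mem _ i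
  have := Module.Finite.finite_basis b
  have := Fintype.ofFinite ι
  exact ⟨piCMod fun i : ι => C.inducedCMod i.1,
    LinearMap.lsum k (fun i : ι => (C.inducedCMod i.1).M) k fun i => AJSCtx.inducedLift (hb i),
    piCMod_projective fun i => AJSCtx.inducedCMod_projective i.1,
    isCHom_lsum fun i => AJSCtx.isCHom_inducedLift (hb i),
    AJSCtx.surjective_lsum_inducedLift hb b.span_eq⟩

/-- **`C_k` has enough projectives**: every object of `C_k` is a homomorphic image of a
projective object of `C_k`. -/
theorem enough_projectives {k : Type} [Field k] [IsAlgClosed k] [CharZero k]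
    {θ : ℕ} (hθ : 1 ≤ θ) (C : AJSCtx k θ) (M : CMod C) :
    ∃ (P : CMod C) (f : P.M →ₗ[k] M.M),
      CProjective P ∧ IsCHom P M f ∧ Function.Surjective f :=
  enough_projectives_general C M
end

section
/- Highest-weight vectors in Verma modules: let M be a left module over an algebra as in the context and let m ∈ M satisfy E_j·m = 0 for all j ∈ I, and K_i·m = κ m, L_i·m = ℓ m for a fixed index i ∈ I and scalars κ, ℓ ∈ k. If t ≥ 1 is an integer such that (t)_{q_ii^{-1}}·κ = (t)_{q_ii}·ℓ, then E_j·(F_i^t·m) = 0 for every j ∈ I. -/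
/-!
The defining relations give `E F^{n+1} m = F (E F^n m) + (K - L) F^n m`, and `K`, `L` act on
`F^n m` by the scalars `q_ii^{-n} κ` and `q_ii^n ℓ`. By induction, `E_i F_i^{n+1} m` is the
scalar `(n+1)_{q_ii^{-1}} κ - (n+1)_{q_ii} ℓ` times `F_i^n m`, which vanishes for `n + 1 = t`.
For `j ≠ i`, `E_j` commutes with `F_i` and so kills every `F_i^n m`.
-/

/-- The quantum number `(n)_x = 1 + x + ⋯ + x^{n−1}`. -/
def qnum {k : Type} [Field k] (n : ℕ) (x : k) : k :=
  ∑ j ∈ Finset.range n, x ^ j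

lemma qnum_zero {k : Type} [Field k] (x : k) : qnum 0 x = 0 := by
  simp [qnum]

lemma qnum_succ {k : Type} [Field k] (n : ℕ) (x : k) : qnum (n + 1) x = qnum n x + x ^ n :=
  Finset.sum_range_succ _ _

section WeightVectors

variable {A M : Type*} [Ring A] [AddCommGroup M] [Module A M]

section CommRing

variable {k : Type*} [CommRing k] [Algebra k A]

lemma smul_algebraMap_smul (X : A) (c : k) (v : M) :
    X • (algebraMap k A c • v) = algebraMap k A c • (X • v) := by
  rw [← mul_smul, ← Algebra.commutes, mul_smul]

lemma smul_mul_smul_eq_algebraMap_smul (c : k) (X Y : A) (v : M) :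
    (c • (X * Y)) • v = algebraMap k A c • (X • (Y • v)) := by
  rw [Algebra.smul_def, mul_smul, mul_smul]

lemma smul_pow_smul_eq_of_mul_eq {K F : A} {a c : k} {m : M}
    (hKF : K * F = a • (F * K)) (hKm : K • m = algebraMap k A c • m) (n : ℕ) :
    K • (F ^ n • m) = algebraMap k A (a ^ n * c) • (F ^ n • m) := by
  induction n with
  | zero => simpa using hKm
  | succ n ih =>
    rw [pow_succ', mul_smul, ← mul_smul K, hKF, smul_mul_smul_eq_algebraMap_smul, ih,
      smul_algebraMap_smul, ← mul_smul (algebraMap k A a), ← map_mul, ← mul_smul F, ← pow_succ',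
      ← mul_assoc, ← pow_succ']

lemma smul_pow_smul_eq_zero_of_commute {E F : A} {m : M} (hEF : Commute E F)
    (hEm : E • m = 0) (n : ℕ) : E • (F ^ n • m) = 0 := by
  rw [← mul_smul, (hEF.pow_right n).eq, mul_smul, hEm, smul_zero]

end CommRing

variable {k : Type} [Field k] [Algebra k A]

lemma smul_pow_succ_smul_eq {E F K L : A} {b c κ ℓ : k} {m : M}
    (hEF : E * F - F * E = K - L) (hKF : K * F = b • (F * K)) (hLF : L * F = c • (F * L))
    (hEm : E • m = 0) (hKm : K • m = algebraMap k A κ • m)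
    (hLm : L • m = algebraMap k A ℓ • m)
    (n : ℕ) :
    E • (F ^ (n + 1) • m) =
      algebraMap k A (qnum (n + 1) b * κ - qnum (n + 1) c * ℓ) • (F ^ n • m) := by
  have step : ∀ n : ℕ, E • (F ^ (n + 1) • m) = F • (E • (F ^ n • m)) +
      algebraMap k A (b ^ n * κ - c ^ n * ℓ) • (F ^ n • m) := by
    intro n
    rw [sub_eq_iff_eq_add'] at hEF
    rw [pow_succ', mul_smul, ← mul_smul E, hEF, add_smul, mul_smul, map_sub, sub_smul, sub_smul,
      smul_pow_smul_eq_of_mul_eq hKF hKm, smul_pow_smul_eq_of_mul_eq hLF hLm]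
  induction n with
  | zero =>
    rw [step, pow_zero, one_smul, hEm, smul_zero, zero_add]
    simp [qnum_succ, qnum_zero]
  | succ n ih =>
    rw [step, ih, smul_algebraMap_smul, ← mul_smul F, ← pow_succ', ← add_smul, ← map_add,
      qnum_succ (n + 1), qnum_succ (n + 1)]
    congr 2
    ring

end WeightVectors

theorem hw_vector_in_verma_general {k : Type} [Field k] {θ : ℕ}
    (q : Fin θ → Fin θ → k)
    {A : Type} [Ring A] [Algebra k A]
    (K L E F : Fin θ → A)
    (hKF : ∀ i j, K i * F j = (q i j)⁻¹ • (F j * K i))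
    (hLF : ∀ i j, L i * F j = q j i • (F j * L i))
    (hEF : ∀ i j, E i * F j - F j * E i = if i = j then K i - L i else 0)
    {M : Type} [AddCommGroup M] [Module A M]
    (m : M) (i : Fin θ) (κ ℓ : k)
    (hEm : ∀ j, E j • m = 0)
    (hKm : K i • m = algebraMap k A κ • m)
    (hLm : L i • m = algebraMap k A ℓ • m)
    (t : ℕ)
    (hqt : qnum t (q i i)⁻¹ * κ = qnum t (q i i) * ℓ) :
    ∀ j, E j • (F i ^ t • m) = 0 := by
  intro j
  by_cases hji : j = i
  · subst hji
    rcases t with _ | n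
    · simpa using hEm j
    · have hEFj : E j * F j - F j * E j = K j - L j := by simpa using hEF j j
      rw [smul_pow_succ_smul_eq hEFj (hKF j j) (hLF j j) (hEm j) hKm hLm, hqt, sub_self,
        map_zero, zero_smul]
  · have hcomm : Commute (E j) (F i) := sub_eq_zero.mp (by simpa [hji] using hEF j i)
    exact smul_pow_smul_eq_zero_of_commute hcomm (hEm j) t

/-- **Highest-weight vectors in Verma modules.** Let `M` be a left module over an algebra
with elements `K_i, K_i⁻¹, L_i, L_i⁻¹, E_i, F_i` satisfying the Drinfeld double relations,
and let `m ∈ M` satisfy `E_j·m = 0` for all `j`, `K_i·m = κ m` and `L_i·m = ℓ m` for a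
fixed `i` and scalars `κ, ℓ ∈ k`. If `t ≥ 1` satisfies `(t)_{q_ii⁻¹}·κ = (t)_{q_ii}·ℓ`,
then `E_j·(F_i^t·m) = 0` for every `j`. -/
theorem hw_vector_in_verma {k : Type} [Field k] {θ : ℕ} (hθ : 1 ≤ θ)
    (q : Fin θ → Fin θ → k) (hq : ∀ i j, q i j ≠ 0)
    {A : Type} [Ring A] [Algebra k A]
    (K K' L L' E F : Fin θ → A)
    (hKK' : ∀ i, K i * K' i = 1) (hK'K : ∀ i, K' i * K i = 1)
    (hLL' : ∀ i, L i * L' i = 1) (hL'L : ∀ i, L' i * L i = 1)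
    (hcomm : ∀ x ∈ Set.range K ∪ Set.range K' ∪ Set.range L ∪ Set.range L',
             ∀ y ∈ Set.range K ∪ Set.range K' ∪ Set.range L ∪ Set.range L',
             x * y = y * x)
    (hKE : ∀ i j, K i * E j = q i j • (E j * K i))
    (hLE : ∀ i j, L i * E j = (q j i)⁻¹ • (E j * L i))
    (hKF : ∀ i j, K i * F j = (q i j)⁻¹ • (F j * K i))
    (hLF : ∀ i j, L i * F j = q j i • (F j * L i))
    (hEF : ∀ i j, E i * F j - F j * E i = if i = j then K i - L i else 0)
    {M : Type} [AddCommGroup M] [Module A M]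
    (m : M) (i : Fin θ) (κ ℓ : k)
    (hEm : ∀ j, E j • m = 0)
    (hKm : K i • m = algebraMap k A κ • m)
    (hLm : L i • m = algebraMap k A ℓ • m)
    (t : ℕ) (ht : 1 ≤ t)
    (hqt : qnum t (q i i)⁻¹ * κ = qnum t (q i i) * ℓ) :
    ∀ j, E j • (F i ^ t • m) = 0 :=
  hw_vector_in_verma_general q K L E F hKF hLF hEF m i κ ℓ hEm hKm hLm t hqt
end

section
/- Invariance of the generalized Cartan matrix under reflection: for every j ≠ i there exists m ∈ ℕ with (m+1)_{p_ii}·(p_ii^m p_ij p_ji − 1) = 0 where p = r_i(q), and the Cartan entry computed from p, namely c'_{ij} = −min{m ∈ ℕ : (m+1)_{p_ii}(p_ii^m p_ij p_ji − 1) = 0}, equals c_ij. Consequently the reflection σ_i determined by r_i(q) coincides with the reflection σ_i determined by q, and r_i(r_i(q)) = q. -/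
/-- The bicharacter on `ℤ^θ` attached to the matrix `q`:
`q(α, β) = ∏_{a,b} q_{ab}^{α_a β_b}`. -/
def bichar {k : Type} [Field k] {θ : ℕ} (q : Fin θ → Fin θ → kˣ)
    (α β : Fin θ → ℤ) : kˣ :=
  ∏ a : Fin θ, ∏ b : Fin θ, q a b ^ (α a * β b)

/-- The entries `c_ij` of row `i` of the generalized Cartan matrix of `q`:
`c_ii = 2` and `c_ij = −min{m ∈ ℕ : (m+1)_{q_ii}(q_ii^m q_ij q_ji − 1) = 0}` for
`j ≠ i`. -/
noncomputable def cartanEntry {k : Type} [Field k] {θ : ℕ}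
    (q : Fin θ → Fin θ → kˣ) (i j : Fin θ) : ℤ :=
  if j = i then 2
  else -(sInf {m : ℕ |
    qnum (m + 1) (q i i : k) * ((q i i : k) ^ m * (q i j : k) * (q j i : k) - 1) = 0} : ℕ)

/-- The reflection `σ_i` of `ℤ^θ` determined by `q`: `σ_i(α_j) = α_j − c_ij α_i`,
extended linearly, i.e. `σ_i(μ) = μ − (∑_j c_ij μ_j) α_i`. -/
noncomputable def sigmaRefl {k : Type} [Field k] {θ : ℕ}
    (q : Fin θ → Fin θ → kˣ) (i : Fin θ) (μ : Fin θ → ℤ) : Fin θ → ℤ :=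
  μ - (∑ j : Fin θ, cartanEntry q i j * μ j) • Pi.single i 1

/-- The reflected matrix `r_i(q)`, with entries
`r_i(q)_{jl} = q(σ_i(α_j), σ_i(α_l))`. -/
noncomputable def riMatrix {k : Type} [Field k] {θ : ℕ}
    (q : Fin θ → Fin θ → kˣ) (i : Fin θ) : Fin θ → Fin θ → kˣ :=
  fun a b => bichar q (sigmaRefl q i (Pi.single a 1)) (sigmaRefl q i (Pi.single b 1))

section Bichar

variable {k : Type} [Field k] {θ : ℕ} (q : Fin θ → Fin θ → kˣ)

lemma bichar_add_left (α α' β : Fin θ → ℤ) :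
    bichar q (α + α') β = bichar q α β * bichar q α' β := by
  simp [bichar, add_mul, zpow_add, Finset.prod_mul_distrib]

lemma bichar_add_right (α β β' : Fin θ → ℤ) :
    bichar q α (β + β') = bichar q α β * bichar q α β' := by
  simp [bichar, mul_add, zpow_add, Finset.prod_mul_distrib]

lemma bichar_zsmul_left (n : ℤ) (α β : Fin θ → ℤ) :
    bichar q (n • α) β = bichar q α β ^ n := by
  simp only [bichar, ← Finset.prod_zpow, ← zpow_mul, Pi.smul_apply, smul_eq_mul, mul_assoc,
    mul_comm n]

lemma bichar_zsmul_right (n : ℤ) (α β : Fin θ → ℤ) :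
    bichar q α (n • β) = bichar q α β ^ n := by
  simp only [bichar, ← Finset.prod_zpow, ← zpow_mul, Pi.smul_apply, smul_eq_mul, mul_comm n,
    mul_assoc]

lemma bichar_single_single (a b : Fin θ) :
    bichar q (Pi.single a 1) (Pi.single b 1) = q a b := by
  rw [bichar, Finset.prod_eq_single a
    (fun s _ hs => Finset.prod_eq_one fun t _ => by simp [Pi.single_apply, hs]) (by simp),
    Finset.prod_eq_single b (fun t _ ht => by simp [ht]) (by simp)]
  simp

lemma bichar_sub_zsmul_sub_zsmul (α β γ δ : Fin θ → ℤ) (c d : ℤ) :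
    bichar q (α - c • γ) (β - d • δ) =
      bichar q α β * bichar q α δ ^ (-d) * bichar q γ β ^ (-c)
        * bichar q γ δ ^ (c * d) := by
  rw [sub_eq_add_neg, sub_eq_add_neg, ← neg_smul, ← neg_smul, bichar_add_left,
    bichar_add_right, bichar_add_right, bichar_zsmul_left, bichar_zsmul_left,
    bichar_zsmul_right, bichar_zsmul_right, ← zpow_mul, neg_mul_neg]
  apply Additive.ofMul.injective
  simp only [ofMul_mul, ofMul_zpow]
  module

end Bichar

section CartanSet

variable {k : Type} [Field k]

/-- For `x = q_ii` and `l = q_ij q_ji` this is the set whose least element is `-c_ij`. -/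
def cartanSet (x l : k) : Set ℕ := {m | qnum (m + 1) x * (x ^ m * l - 1) = 0}

variable {x l u : k} {m n : ℕ}

lemma mem_cartanSet_iff : m ∈ cartanSet x l ↔ qnum (m + 1) x = 0 ∨ x ^ m * l = 1 := by
  simp [cartanSet, sub_eq_zero]

lemma pow_eq_one_of_qnum_eq_zero (h : qnum n x = 0) : x ^ n = 1 := by
  have := geom_sum_mul x n
  rwa [← qnum, h, zero_mul, eq_comm, sub_eq_zero] at this

lemma pow_mul_eq_one_of_mul_mul_pow_eq_one (hu : u * l * x ^ (2 * n) = 1) (hl : x ^ n * l = 1) :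
    x ^ n * u = 1 :=
  calc x ^ n * u = x ^ n * u * (x ^ n * l) := by rw [hl, mul_one]
    _ = u * l * x ^ (2 * n) := by ring
    _ = 1 := hu

lemma mem_cartanSet_of_mul_mul_pow_eq_one (hu : u * l * x ^ (2 * n) = 1)
    (hn : n ∈ cartanSet x l) : n ∈ cartanSet x u := by
  rw [mem_cartanSet_iff] at hn ⊢
  exact hn.imp_right (pow_mul_eq_one_of_mul_mul_pow_eq_one hu)

lemma exists_lt_mem_cartanSet (hu : u * l * x ^ (2 * n) = 1) (hn : n ∈ cartanSet x l)
    (hm : m ∈ cartanSet x u) (hmn : m < n) : ∃ m' < n, m' ∈ cartanSet x l := by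
  rcases mem_cartanSet_iff.1 hm with hqm | hmu
  · exact ⟨m, hmn, mem_cartanSet_iff.2 (Or.inl hqm)⟩
  rcases mem_cartanSet_iff.1 hn with hqn | hnl
  · have hxn := pow_eq_one_of_qnum_eq_zero hqn
    obtain ⟨d, rfl⟩ : ∃ d, n = m + d + 1 := ⟨n - m - 1, by omega⟩
    refine ⟨d, by omega, mem_cartanSet_iff.2 (Or.inr ?_)⟩
    calc x ^ d * l = x ^ d * l * (x ^ m * u) * x ^ (m + d + 1 + 1) := by
          rw [hmu, hxn, mul_one, mul_one]
      _ = u * l * x ^ (2 * (m + d + 1)) := by ring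
      _ = 1 := hu
  · refine ⟨m, hmn, mem_cartanSet_iff.2 (Or.inr ?_)⟩
    calc x ^ m * l = x ^ m * l * (x ^ n * u) := by
          rw [pow_mul_eq_one_of_mul_mul_pow_eq_one hu hnl, mul_one]
      _ = (x ^ n * l) * (x ^ m * u) := by ring
      _ = 1 := by rw [hnl, hmu, mul_one]

lemma sInf_cartanSet_eq (hl : (cartanSet x l).Nonempty)
    (hu : u * l * x ^ (2 * sInf (cartanSet x l)) = 1) :
    sInf (cartanSet x u) = sInf (cartanSet x l) := by
  have hmem := mem_cartanSet_of_mul_mul_pow_eq_one hu (Nat.sInf_mem hl)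
  refine le_antisymm (Nat.sInf_le hmem) (not_lt.1 fun hlt => ?_)
  obtain ⟨m', hm', hm'l⟩ :=
    exists_lt_mem_cartanSet hu (Nat.sInf_mem hl) (Nat.sInf_mem ⟨_, hmem⟩) hlt
  exact Nat.notMem_of_lt_sInf hm' hm'l

end CartanSet

section Reflection

variable {k : Type} [Field k] {θ : ℕ} (q : Fin θ → Fin θ → kˣ) (i : Fin θ)

lemma cartanEntry_self : cartanEntry q i i = 2 := if_pos rfl

lemma cartanEntry_of_ne {j : Fin θ} (hj : j ≠ i) :
    cartanEntry q i j = -(sInf (cartanSet (q i i : k) (q i j * q j i : k)) : ℕ) := by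
  simp only [cartanEntry, if_neg hj, cartanSet, mul_assoc]

lemma sigmaRefl_single (a : Fin θ) :
    sigmaRefl q i (Pi.single a 1) = Pi.single a 1 - cartanEntry q i a • Pi.single i 1 := by
  rw [sigmaRefl, Finset.sum_eq_single a (fun t _ ht => by simp [ht]) (by simp)]
  simp

lemma riMatrix_apply (a b : Fin θ) :
    riMatrix q i a b = q a b * q a i ^ (-cartanEntry q i b) * q i b ^ (-cartanEntry q i a)
      * q i i ^ (cartanEntry q i a * cartanEntry q i b) := by
  simp only [riMatrix, sigmaRefl_single, bichar_sub_zsmul_sub_zsmul, bichar_single_single]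

lemma riMatrix_self_left (b : Fin θ) :
    riMatrix q i i b = (q i b)⁻¹ * q i i ^ cartanEntry q i b := by
  rw [riMatrix_apply, cartanEntry_self]
  apply Additive.ofMul.injective
  simp only [ofMul_mul, ofMul_zpow, ofMul_inv]
  module

lemma riMatrix_self_right (a : Fin θ) :
    riMatrix q i a i = (q a i)⁻¹ * q i i ^ cartanEntry q i a := by
  rw [riMatrix_apply, cartanEntry_self]
  apply Additive.ofMul.injective
  simp only [ofMul_mul, ofMul_zpow, ofMul_inv]
  module

lemma riMatrix_self_self : riMatrix q i i i = q i i := by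
  rw [riMatrix_self_left, cartanEntry_self]
  group

lemma riMatrix_mul_mul_pow_eq_one {j : Fin θ} (hj : j ≠ i) :
    (riMatrix q i i j * riMatrix q i j i : k) * (q i j * q j i : k)
      * (q i i : k) ^ (2 * sInf (cartanSet (q i i : k) (q i j * q j i : k))) = 1 := by
  set n := sInf (cartanSet (q i i : k) (q i j * q j i : k))
  have hc : cartanEntry q i j = -n := cartanEntry_of_ne q i hj
  have h : riMatrix q i i j * riMatrix q i j i * (q i j * q j i) * q i i ^ (2 * n) = 1 := by
    rw [riMatrix_self_left, riMatrix_self_right, hc, ← zpow_natCast]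
    apply Additive.ofMul.injective
    simp only [ofMul_mul, ofMul_zpow, ofMul_inv, ofMul_one]
    push_cast
    module
  simpa using congrArg Units.val h

variable {q i}

lemma mem_cartanSet_riMatrix {j : Fin θ} (hj : j ≠ i)
    (hne : (cartanSet (q i i : k) (q i j * q j i : k)).Nonempty) :
    sInf (cartanSet (q i i : k) (q i j * q j i : k)) ∈
      cartanSet (riMatrix q i i i : k) (riMatrix q i i j * riMatrix q i j i : k) := by
  rw [riMatrix_self_self]
  exact mem_cartanSet_of_mul_mul_pow_eq_one (riMatrix_mul_mul_pow_eq_one q i hj)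
    (Nat.sInf_mem hne)

lemma cartanEntry_riMatrix {j : Fin θ}
    (hne : j ≠ i → (cartanSet (q i i : k) (q i j * q j i : k)).Nonempty) :
    cartanEntry (riMatrix q i) i j = cartanEntry q i j := by
  obtain rfl | hj := eq_or_ne j i
  · rw [cartanEntry_self, cartanEntry_self]
  rw [cartanEntry_of_ne _ _ hj, cartanEntry_of_ne _ _ hj, riMatrix_self_self,
    sInf_cartanSet_eq (hne hj) (riMatrix_mul_mul_pow_eq_one q i hj)]

lemma riMatrix_riMatrix (hc : ∀ j, cartanEntry (riMatrix q i) i j = cartanEntry q i j) :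
    riMatrix (riMatrix q i) i = q := by
  funext a b
  rw [riMatrix_apply, hc, hc, riMatrix_apply, riMatrix_self_right, riMatrix_self_left,
    riMatrix_self_self]
  apply Additive.ofMul.injective
  simp only [ofMul_mul, ofMul_zpow, ofMul_inv]
  module

end Reflection

theorem cartan_matrix_reflection_invariance_general {k : Type} [Field k] {θ : ℕ}
    (q : Fin θ → Fin θ → kˣ) (i : Fin θ)
    (hq : ∀ j, j ≠ i → ∃ m : ℕ,
      qnum (m + 1) (q i i : k) * ((q i i : k) ^ m * (q i j : k) * (q j i : k) - 1) = 0) :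
    (∀ j, j ≠ i → ∃ m : ℕ,
      qnum (m + 1) ((riMatrix q i) i i : k)
        * (((riMatrix q i) i i : k) ^ m * ((riMatrix q i) i j : k)
            * ((riMatrix q i) j i : k) - 1) = 0) ∧
    (∀ j, cartanEntry (riMatrix q i) i j = cartanEntry q i j) ∧
    sigmaRefl (riMatrix q i) i = sigmaRefl q i ∧
    riMatrix (riMatrix q i) i = q := by
  have hne (j : Fin θ) (hj : j ≠ i) : (cartanSet (q i i : k) (q i j * q j i : k)).Nonempty := by
    simpa only [Set.Nonempty, cartanSet, Set.mem_ofPred_eq, mul_assoc] using hq j hj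
  have hc (j : Fin θ) : cartanEntry (riMatrix q i) i j = cartanEntry q i j :=
    cartanEntry_riMatrix (hne j)
  refine ⟨fun j hj => ?_, hc, ?_, riMatrix_riMatrix hc⟩
  · exact ⟨_, by simpa only [cartanSet, Set.mem_ofPred_eq, mul_assoc]
      using mem_cartanSet_riMatrix hj (hne j hj)⟩
  · funext μ
    simp only [sigmaRefl, hc]

/-- **Invariance of the generalized Cartan matrix under reflection.** With
`p = r_i(q)`: for every `j ≠ i` there is `m ∈ ℕ` with
`(m+1)_{p_ii}(p_ii^m p_ij p_ji − 1) = 0`; the Cartan entries computed from `p` equal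
those computed from `q`; hence the reflection `σ_i` determined by `r_i(q)` coincides with
the one determined by `q`, and `r_i(r_i(q)) = q`. -/
theorem cartan_matrix_reflection_invariance {k : Type} [Field k] {θ : ℕ} (hθ : 1 ≤ θ)
    (q : Fin θ → Fin θ → kˣ) (i : Fin θ)
    (hq : ∀ j, j ≠ i → ∃ m : ℕ,
      qnum (m + 1) (q i i : k) * ((q i i : k) ^ m * (q i j : k) * (q j i : k) - 1) = 0) :
    (∀ j, j ≠ i → ∃ m : ℕ,
      qnum (m + 1) ((riMatrix q i) i i : k)
        * (((riMatrix q i) i i : k) ^ m * ((riMatrix q i) i j : k)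
            * ((riMatrix q i) j i : k) - 1) = 0) ∧
    (∀ j, cartanEntry (riMatrix q i) i j = cartanEntry q i j) ∧
    sigmaRefl (riMatrix q i) i = sigmaRefl q i ∧
    riMatrix (riMatrix q i) i = q :=
  cartan_matrix_reflection_invariance_general q i hq
end
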